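/- In the transfinite construction over a full model N, with ⇝ the stable relation at the closure ordinal, the following hold for all terms t₁, t₂: (1) if L t₁ ⇝ ⊤ and for all t₃ with t₁ t₃ ⇝ ⊤ one has t₂ t₃ ⇝ ⊤, then Ξ t₁ t₂ ⇝ ⊤; (2) if L t₁ ⇝ ⊤ and for all t₃ with t₁ t₃ ⇝ ⊤ one has H(t₂ t₃) ⇝ ⊤, then H(Ξ t₁ t₂) ⇝ ⊤; (3) if L t₁ ⇝ ⊤, and either L t₂ ⇝ ⊤ or there is no t₃ with t₁ t₃ ⇝ ⊤, then L(F t₁ t₂) ⇝ ⊤. -/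
import Mathlib


/-! Infrastructure: the transfinite model construction over a full model of
classical higher-order logic, following Czajka, "A semantic approach to illative
combinatory logic", Section 4. -/

namespace ILM

/-- Type-free λ-terms over a set `C` of primitive constants (de Bruijn representation). -/
inductive Tm (C : Type) : Type
  | var : Nat → Tm C
  | const : C → Tm C
  | app : Tm C → Tm C → Tm C
  | lam : Tm C → Tm C

namespace Tm

variable {C : Type}

/-- Renaming of free de Bruijn variables. -/
def rename (f : Nat → Nat) : Tm C → Tm C
  | .var n => .var (f n)
  | .const c => .const c
  | .app a b => .app (a.rename f) (b.rename f)
  | .lam a => .lam (a.rename fun n => match n with | 0 => 0 | m + 1 => f m + 1)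

/-- Shift all free variables up by one. -/
def lift (t : Tm C) : Tm C := t.rename (· + 1)

/-- Simultaneous substitution. -/
def bind (σ : Nat → Tm C) : Tm C → Tm C
  | .var n => σ n
  | .const c => .const c
  | .app a b => .app (a.bind σ) (b.bind σ)
  | .lam a => .lam (a.bind fun n => match n with | 0 => .var 0 | m + 1 => (σ m).lift)

/-- Substitution of `s` for the variable `0` (β-contraction of `(λ.t) s`). -/
def subst0 (t s : Tm C) : Tm C := t.bind fun n => match n with | 0 => s | m + 1 => .var m

end Tm

/-- Extended types `T⁺`: the constructors generate all expressions
`o | B | arr | ω | ε`; the grammar `T⁺ ::= T₁ | ω | ε`, `T₁ ::= T | T₁→T₁ | ω→T₁`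
is captured by the predicate `IsT1` below. -/
inductive ETy (B : Type) : Type
  | o : ETy B
  | base : B → ETy B
  | arr : ETy B → ETy B → ETy B
  | omega : ETy B
  | eps : ETy B
deriving DecidableEq

/-- Membership in `T₁` (so `T⁺ = T₁ ∪ {ω, ε}`). -/
inductive IsT1 {B : Type} : ETy B → Prop
  | o : IsT1 .o
  | base (b : B) : IsT1 (.base b)
  | arr {τ1 τ2 : ETy B} : IsT1 τ1 → IsT1 τ2 → IsT1 (.arr τ1 τ2)
  | omegaArr {τ2 : ETy B} : IsT1 τ2 → IsT1 (.arr .omega τ2)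

/-- Membership in `T⁺`. -/
def IsTp {B : Type} (τ : ETy B) : Prop := IsT1 τ ∨ τ = .omega ∨ τ = .eps

/-- The normalized arrow `τ₁ → τ₂`, implementing the notational conventions
`τ→ε = ε` (for `τ ≠ ε`), `ε→τ = ω` and `τ→ω = ω`. -/
def arrN {B : Type} : ETy B → ETy B → ETy B
  | _, .omega => .omega
  | .eps, _ => .omega
  | _, .eps => .eps
  | τ1, τ2 => .arr τ1 τ2

/-- The rank of a type. -/
def rank {B : Type} : ETy B → Nat
  | .arr τ1 τ2 => max (rank τ1 + 1) (rank τ2)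
  | _ => 1

/-- A canonical system over domains `D` for the base types: the primitive
constants `Σ⁺ = {Ξ, L} ∪ {A_τ : τ ∈ B} ∪ ⋃_τ Σ_τ`, the sets `T_τ` of canonical
terms of each type, the distinguished canonical constants `⊤, ⊥` of type `o`,
and the function `F` associating to each canonical term of a function type its
set-theoretic function, as constructed in the paper from a full model
`N = ⟨{D_τ}, I⟩` of classical higher-order logic.  The fields axiomatize the
construction: the sets of canonical terms of distinct types are disjoint sets of
closed normal terms (`T_ω` is the set of all terms, `T_ε = ∅`), for `τ₁ ≠ ω`
the canonical terms of type `τ₁→τ₂` are constants corresponding bijectively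
(via `F`) to *all* set-theoretic functions from `T_{τ₁}` to `T_{τ₂}` (this is
where fullness of `N` enters), the canonical terms of type `ω→τ₂` are the terms
`λx.ρ` with `ρ ∈ T_{τ₂}` (with `F` giving constant functions), the canonical
terms of base type `b` correspond bijectively to the domain `D b`, and those
of type `o` are exactly `⊤` and `⊥`. -/
structure CanSys (B : Type) (D : B → Type) where
  /-- the primitive constants `Σ⁺` -/
  C : Type
  cXi : C
  cL : C
  cA : B → C
  /-- the sets `T_τ` of canonical terms -/
  TT : ETy B → Set (Tm C)
  /-- the canonical constant `⊤ ∈ Σ_o` -/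
  top : Tm C
  /-- the canonical constant `⊥ ∈ Σ_o` -/
  bot : Tm C
  /-- `F τ₁ τ₂ ρ t` : the value at `t ∈ T_{τ₁}` of the function associated with
  the canonical term `ρ ∈ T_{τ₁→τ₂}` -/
  F : ETy B → ETy B → Tm C → Tm C → Tm C
  hXiL : cXi ≠ cL
  hXiA : ∀ b, cXi ≠ cA b
  hLA : ∀ b, cL ≠ cA b
  hAinj : Function.Injective cA
  TT_omega : TT .omega = Set.univ
  TT_eps : TT .eps = ∅
  TT_invalid : ∀ τ : ETy B, ¬ IsT1 τ → τ ≠ .omega → TT τ = ∅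
  TT_o : TT .o = {top, bot}
  top_ne_bot : top ≠ bot
  TT_const : ∀ τ : ETy B, IsT1 τ → (∀ τ2, τ ≠ .arr .omega τ2) →
    ∀ t ∈ TT τ, ∃ c : C, t = .const c
  TT_base_equiv : ∀ b : B, Nonempty (D b ≃ TT (.base b))
  TT_omega_arr : ∀ τ2 : ETy B, IsT1 τ2 → TT (.arr .omega τ2) = Tm.lam '' TT τ2
  F_omega : ∀ τ2 : ETy B, ∀ ρ ∈ TT τ2, ∀ t : Tm C, F .omega τ2 (.lam ρ) t = ρ
  F_mapsto : ∀ τ1 τ2 : ETy B, IsT1 (.arr τ1 τ2) →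
    ∀ ρ ∈ TT (.arr τ1 τ2), ∀ t ∈ TT τ1, F τ1 τ2 ρ t ∈ TT τ2
  F_full : ∀ τ1 τ2 : ETy B, IsT1 (.arr τ1 τ2) → τ1 ≠ .omega →
    ∀ g : Tm C → Tm C, (∀ t ∈ TT τ1, g t ∈ TT τ2) →
      ∃ ρ ∈ TT (.arr τ1 τ2), ∀ t ∈ TT τ1, F τ1 τ2 ρ t = g t
  F_inj : ∀ τ1 τ2 : ETy B, IsT1 (.arr τ1 τ2) → τ1 ≠ .omega →
    ∀ ρ ∈ TT (.arr τ1 τ2), ∀ ρ' ∈ TT (.arr τ1 τ2),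
      (∀ t ∈ TT τ1, F τ1 τ2 ρ t = F τ1 τ2 ρ' t) → ρ = ρ'
  TT_disj : ∀ τ τ' : ETy B, τ ≠ τ' → τ ≠ .omega → τ' ≠ .omega →
    Disjoint (TT τ) (TT τ')
  prim_notin : ∀ τ : ETy B, τ ≠ .omega →
    Tm.const cXi ∉ TT τ ∧ Tm.const cL ∉ TT τ ∧ ∀ b, Tm.const (cA b) ∉ TT τ
  cover : ∀ c : C, c = cXi ∨ c = cL ∨ (∃ b, c = cA b) ∨
    ∃ τ : ETy B, τ ≠ .omega ∧ Tm.const c ∈ TT τ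

namespace CanSys

variable {B : Type} {D : B → Type} (S : CanSys B D)

/-- The term `Ξ`. -/
def XiT : Tm S.C := .const S.cXi

/-- The term `L`. -/
def LT : Tm S.C := .const S.cL

/-- The term `A_b`. -/
def AT (b : B) : Tm S.C := .const (S.cA b)

/-- `K t = λx.t` with `x ∉ FV(t)`. -/
def Kt (t : Tm S.C) : Tm S.C := .lam t.lift

/-- `H t = L (K t)`. -/
def Ht (t : Tm S.C) : Tm S.C := .app S.LT (S.Kt t)

/-- The term `H = λx. L (K x)`. -/
def Hterm : Tm S.C := .lam (.app S.LT (.lam (.var 1)))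

/-- `F t₁ t₂`, written out according to the notational convention:
`λf. Ξ t₁ (λx. t₂ (f x))` if `t₂` is not a λ-abstraction, and
`λf. Ξ t₁ (λx. q₂[z/(f x)])` if `t₂ = λz. q₂`. -/
def Ft (t1 t2 : Tm S.C) : Tm S.C :=
  .lam (.app (.app S.XiT t1.lift)
    (match t2 with
     | .lam b => .lam (b.bind fun n => match n with
         | 0 => .app (.var 1) (.var 0)
         | m + 1 => .var (m + 2))
     | t2 => .lam (.app t2.lift.lift (.app (.var 1) (.var 0)))))

end CanSys


mutual
  /-- One-step reduction `→_{≤α}` of the reduction system `R_α`: the context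
  closure of β- and η-reduction together with the rules `c t → F(c)(ρ₁)` for
  canonical constants `c ∈ Σ_{τ₁→τ₂}` (`τ₁ ≠ ω`) and `t ≻_{<α} ρ₁`. -/
  inductive Step {B : Type} {D : B → Type} (S : CanSys B D) :
      Ordinal.{0} → Tm S.C → Tm S.C → Prop
    | beta (α : Ordinal.{0}) (t s : Tm S.C) : Step S α (.app (.lam t) s) (t.subst0 s)
    | eta (α : Ordinal.{0}) (t : Tm S.C) : Step S α (.lam (.app t.lift (.var 0))) t
    | crule {α γ : Ordinal.{0}} (hγ : γ < α) {τ1 τ2 : ETy B} (h1 : τ1 ≠ .omega)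
        {c : Tm S.C} (hc : c ∈ S.TT (.arr τ1 τ2)) {ρ1 : Tm S.C} (hρ1 : ρ1 ∈ S.TT τ1)
        {t : Tm S.C} (hs : Succ S γ t ρ1) :
        Step S α (.app c t) (S.F τ1 τ2 c ρ1)
    | appL {α : Ordinal.{0}} {t t' : Tm S.C} (s : Tm S.C) :
        Step S α t t' → Step S α (.app t s) (.app t' s)
    | appR (t : Tm S.C) {α : Ordinal.{0}} {s s' : Tm S.C} :
        Step S α s s' → Step S α (.app t s) (.app t s')
    | lam {α : Ordinal.{0}} {t t' : Tm S.C} :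
        Step S α t t' → Step S α (.lam t) (.lam t')

  /-- Many-step reduction `↠_{≤α}` (the reflexive-transitive closure of `→_{≤α}`). -/
  inductive Steps {B : Type} {D : B → Type} (S : CanSys B D) :
      Ordinal.{0} → Tm S.C → Tm S.C → Prop
    | refl (α : Ordinal.{0}) (t : Tm S.C) : Steps S α t t
    | tail {α : Ordinal.{0}} {t u v : Tm S.C} :
        Steps S α t u → Step S α u v → Steps S α t v

  /-- `t ⇝_α ρ` : `t ↠_{≤α} t' ≻_α ρ` for some `t'`. -/
  inductive Lead {B : Type} {D : B → Type} (S : CanSys B D) :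
      Ordinal.{0} → Tm S.C → Tm S.C → Prop
    | mk {α : Ordinal.{0}} {t t' ρ : Tm S.C} :
        Steps S α t t' → Succ S α t' ρ → Lead S α t ρ

  /-- `t ⇝_{<α} ρ` : `t ⇝_γ ρ` for some `γ < α`. -/
  inductive LeadLt {B : Type} {D : B → Type} (S : CanSys B D) :
      Ordinal.{0} → Tm S.C → Tm S.C → Prop
    | mk {α γ : Ordinal.{0}} {t ρ : Tm S.C} :
        γ < α → Lead S γ t ρ → LeadLt S α t ρ

  /-- The typing relation `t ∼_α τ` (Definition 4.4), by the rules
  (A), (H), (Kω), (Kε), (F) and (Fω). -/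
  inductive Sim {B : Type} {D : B → Type} (S : CanSys B D) :
      Ordinal.{0} → Tm S.C → ETy B → Prop
    | ofA (α : Ordinal.{0}) (b : B) : Sim S α (S.AT b) (.base b)
    | ofH (α : Ordinal.{0}) : Sim S α S.Hterm .o
    | ofKom {α : Ordinal.{0}} {t : Tm S.C} :
        LeadLt S α t S.top → Sim S α (S.Kt t) .omega
    | ofKeps {α : Ordinal.{0}} {t : Tm S.C} :
        LeadLt S α t S.bot → Sim S α (S.Kt t) .eps
    | ofF {α γ1 γ2 : Ordinal.{0}} (h1 : γ1 < α) (h2 : γ2 < α)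
        {t1 t2 : Tm S.C} {τ1 τ2 : ETy B} :
        Sim S γ1 t1 τ1 → Sim S γ2 t2 τ2 → Sim S α (S.Ft t1 t2) (arrN τ1 τ2)
    | ofFom {α γ : Ordinal.{0}} (hγ : γ < α) {t1 t2 : Tm S.C} :
        Sim S γ t1 .eps → Sim S α (S.Ft t1 t2) .omega

  /-- The relation `t ≻_α ρ` between terms and canonical terms (Definition 4.5). -/
  inductive Succ {B : Type} {D : B → Type} (S : CanSys B D) :
      Ordinal.{0} → Tm S.C → Tm S.C → Prop
    /- `ρ ≻_α ρ` for canonical `ρ` -/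
    | refl {τ : ETy B} (hτ : τ ≠ .omega) {ρ : Tm S.C} (hρ : ρ ∈ S.TT τ)
        (α : Ordinal.{0}) : Succ S α ρ ρ
    /- `t ≻_α ρ` when `ρ` has canonical type `τ₁→τ₂` (possibly `τ₁ = ω`) and
       `t t₁ ⇝_{<α} F(ρ)(t₁)` for all `t₁ ∈ T_{τ₁}` -/
    | fn {τ1 τ2 : ETy B} {ρ : Tm S.C} (hρ : ρ ∈ S.TT (.arr τ1 τ2))
        {α : Ordinal.{0}} {t : Tm S.C}
        (h : ∀ t1 ∈ S.TT τ1, LeadLt S α (.app t t1) (S.F τ1 τ2 ρ t1)) :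
        Succ S α t ρ
    /- base postulates for `t ≻_α ⊤` -/
    | topLA (α : Ordinal.{0}) (b : B) : Succ S α (.app S.LT (S.AT b)) S.top
    | topLH (α : Ordinal.{0}) : Succ S α (.app S.LT S.Hterm) S.top
    | topA {b : B} {c : Tm S.C} (hc : c ∈ S.TT (.base b)) (α : Ordinal.{0}) :
        Succ S α (.app (S.AT b) c) S.top
    | topH {c : Tm S.C} (hc : c = S.top ∨ c = S.bot) (α : Ordinal.{0}) :
        Succ S α (S.Ht c) S.top
    /- `(Ξ_i^⊤)` -/
    | xiTop {α : Ordinal.{0}} (hα : 0 < α) {t1 t2 : Tm S.C} {τ : ETy B}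
        (h1 : Sim S α t1 τ) (h2 : ∀ t3 ∈ S.TT τ, LeadLt S α (.app t2 t3) S.top) :
        Succ S α (.app (.app S.XiT t1) t2) S.top
    /- `(Ξ_H^⊤)` -/
    | xiHTop {α : Ordinal.{0}} (hα : 0 < α) {t1 t2 : Tm S.C} {τ : ETy B}
        (h1 : Sim S α t1 τ)
        (h2 : ∀ t3 ∈ S.TT τ, LeadLt S α (S.Ht (.app t2 t3)) S.top) :
        Succ S α (S.Ht (.app (.app S.XiT t1) t2)) S.top
    /- `(F_L^⊤)`, first case: `t₁ ∼_α ε` -/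
    | flTopEps {α : Ordinal.{0}} (hα : 0 < α) {t1 t2 : Tm S.C}
        (h1 : Sim S α t1 .eps) :
        Succ S α (.app S.LT (S.Ft t1 t2)) S.top
    /- `(F_L^⊤)`, second case: `t₁ ∼_α τ` for some `τ ≠ ε` and `L t₂ ⇝_{<α} ⊤` -/
    | flTop {α : Ordinal.{0}} (hα : 0 < α) {t1 t2 : Tm S.C} {τ : ETy B}
        (hτ : τ ≠ .eps) (h1 : Sim S α t1 τ) (h2 : LeadLt S α (.app S.LT t2) S.top) :
        Succ S α (.app S.LT (S.Ft t1 t2)) S.top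
    /- `(H_i^⊤)` -/
    | hiTop {α : Ordinal.{0}} (hα : 0 < α) {t1 : Tm S.C} (h : LeadLt S α t1 S.top) :
        Succ S α (S.Ht t1) S.top
    /- `(Ξ^⊥)` -/
    | xiBot {α : Ordinal.{0}} (hα : 0 < α) {t1 t2 : Tm S.C} {τ : ETy B}
        {γ : Ordinal.{0}} (hγ : γ < α)
        (hH : Succ S γ (S.Ht (.app (.app S.XiT t1) t2)) S.top)
        (h1 : Sim S α t1 τ) {t3 : Tm S.C} (h3 : t3 ∈ S.TT τ)
        (hb : LeadLt S α (.app t2 t3) S.bot) :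
        Succ S α (.app (.app S.XiT t1) t2) S.bot
end


variable {B : Type} {D : B → Type}

/-- `t ≻ ρ` : the stable relation `≻_ζ` at the closure ordinal (by monotonicity,
it equals the union of the `≻_α` over all ordinals `α`). -/
def SuccS (S : CanSys B D) (t ρ : Tm S.C) : Prop := ∃ α : Ordinal.{0}, Succ S α t ρ

/-- `t ∼ τ` : the stable typing relation. -/
def SimS (S : CanSys B D) (t : Tm S.C) (τ : ETy B) : Prop := ∃ α : Ordinal.{0}, Sim S α t τ

/-- One-step reduction of the stable reduction system `R`. -/
def StepR (S : CanSys B D) (t t' : Tm S.C) : Prop := ∃ α : Ordinal.{0}, Step S α t t'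

/-- `t ↠_R t'` : many-step reduction in the stable reduction system `R`. -/
def StepsR (S : CanSys B D) : Tm S.C → Tm S.C → Prop := Relation.ReflTransGen (StepR S)

/-- `t ⇝ ρ` : the stable relation `⇝_ζ`. -/
def LeadR (S : CanSys B D) (t ρ : Tm S.C) : Prop :=
  ∃ t', StepsR S t t' ∧ SuccS S t' ρ

/-- `t =_{≤α} t'` : convertibility in `R_α`. -/
def ConvLe (S : CanSys B D) (α : Ordinal.{0}) : Tm S.C → Tm S.C → Prop :=
  Relation.EqvGen (Step S α)

/-- `t =_R t'` : convertibility in the stable reduction system `R`. -/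
def ConvR (S : CanSys B D) : Tm S.C → Tm S.C → Prop :=
  Relation.EqvGen (StepR S)

/-- Filling the boxes `□₁, …, □ₖ` of a `k`-ary context (a λ-term over
`Σ⁺ ∪ {□₁, …, □ₖ}`) with terms, in such a way that the free variables of the
inserted terms do not become bound. -/
def fillk {C : Type} {k : Nat} (ts : Fin k → Tm C) : Tm (Fin k ⊕ C) → Tm C
  | .var n => .var n
  | .const (.inl i) => ts i
  | .const (.inr c) => .const c
  | .app a b => .app (fillk ts a) (fillk ts b)
  | .lam a => .lam (fillk (fun i => (ts i).lift) a)

/-- Filling a unary context. -/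
def fill1 {C : Type} (Ctx : Tm (Fin 1 ⊕ C)) (t : Tm C) : Tm C :=
  fillk (fun _ => t) Ctx

/-- `t ≫^n t'` (at the stable level): there are a `k`-ary context `Cx`, terms
`t₁, …, t_k` and canonical terms `ρ₁, …, ρ_k` of ranks `≤ n` with `tᵢ ≻ ρᵢ`,
`t = Cx[t₁,…,t_k]` and `t' = Cx[ρ₁,…,ρ_k]`. -/
def Gg (S : CanSys B D) (n : Nat) (t t' : Tm S.C) : Prop :=
  ∃ (k : Nat) (Cx : Tm (Fin k ⊕ S.C)) (ts ρs : Fin k → Tm S.C),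
    (∀ i, SuccS S (ts i) (ρs i)) ∧
    (∀ i, ∃ τ : ETy B, τ ≠ .omega ∧ ρs i ∈ S.TT τ ∧ rank τ ≤ n) ∧
    t = fillk ts Cx ∧ t' = fillk ρs Cx


namespace Tm
variable {C : Type}

/-- shifted renaming (matches the `lam` clause of `rename`) -/
def shr (f : Nat → Nat) : Nat → Nat := fun n => match n with | 0 => 0 | m + 1 => f m + 1
/-- shifted substitution (matches the `lam` clause of `bind`) -/
def shs (σ : Nat → Tm C) : Nat → Tm C := fun n => match n with | 0 => .var 0 | m + 1 => (σ m).lift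

theorem rename_def (f : Nat → Nat) (t : Tm C) : t.rename f =
    match t with
    | .var n => .var (f n)
    | .const c => .const c
    | .app a b => .app (a.rename f) (b.rename f)
    | .lam a => .lam (a.rename (shr f)) := by
  cases t <;> rfl

theorem bind_def (σ : Nat → Tm C) (t : Tm C) : t.bind σ =
    match t with
    | .var n => σ n
    | .const c => .const c
    | .app a b => .app (a.bind σ) (b.bind σ)
    | .lam a => .lam (a.bind (shs σ)) := by
  cases t <;> rfl

@[simp] theorem rename_var (f : Nat → Nat) (n : Nat) : (Tm.var (C := C) n).rename f = .var (f n) := rfl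
@[simp] theorem rename_const (f : Nat → Nat) (c : C) : (Tm.const c).rename f = .const c := rfl
@[simp] theorem rename_app (f : Nat → Nat) (a b : Tm C) :
    (Tm.app a b).rename f = .app (a.rename f) (b.rename f) := rfl
theorem rename_lam (f : Nat → Nat) (a : Tm C) :
    (Tm.lam a).rename f = .lam (a.rename (shr f)) := rfl
@[simp] theorem bind_var' (σ : Nat → Tm C) (n : Nat) : (Tm.var (C := C) n).bind σ = σ n := rfl
@[simp] theorem bind_const (σ : Nat → Tm C) (c : C) : (Tm.const (C := C) c).bind σ = .const c := rfl
@[simp] theorem bind_app (σ : Nat → Tm C) (a b : Tm C) :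
    (Tm.app a b).bind σ = .app (a.bind σ) (b.bind σ) := rfl
theorem bind_lam (σ : Nat → Tm C) (a : Tm C) :
    (Tm.lam a).bind σ = .lam (a.bind (shs σ)) := rfl

theorem rename_congr {f g : Nat → Nat} (h : ∀ n, f n = g n) (t : Tm C) :
    t.rename f = t.rename g := by
  induction t generalizing f g with
  | var n => simp [h]
  | const c => rfl
  | app a b iha ihb => simp [iha h, ihb h]
  | lam a ih =>
      rw [rename_lam, rename_lam]
      exact congrArg Tm.lam (ih (fun n => by cases n <;> simp [shr, h]))

theorem bind_congr {σ σ' : Nat → Tm C} (h : ∀ n, σ n = σ' n) (t : Tm C) :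
    t.bind σ = t.bind σ' := by
  induction t generalizing σ σ' with
  | var n => simp [h]
  | const c => rfl
  | app a b iha ihb => simp [iha h, ihb h]
  | lam a ih =>
      rw [bind_lam, bind_lam]
      exact congrArg Tm.lam (ih (fun n => by cases n <;> simp [shs, h]))

theorem rename_rename (f g : Nat → Nat) (t : Tm C) :
    (t.rename f).rename g = t.rename (fun n => g (f n)) := by
  induction t generalizing f g with
  | var n => rfl
  | const c => rfl
  | app a b iha ihb => simp [iha, ihb]
  | lam a ih =>
      rw [rename_lam, rename_lam, rename_lam, ih]
      exact congrArg Tm.lam (rename_congr (fun n => by cases n <;> simp [shr]) a)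

theorem bind_rename (f : Nat → Nat) (σ : Nat → Tm C) (t : Tm C) :
    (t.rename f).bind σ = t.bind (fun n => σ (f n)) := by
  induction t generalizing f σ with
  | var n => rfl
  | const c => rfl
  | app a b iha ihb => simp [iha, ihb]
  | lam a ih =>
      rw [rename_lam, bind_lam, bind_lam, ih]
      exact congrArg Tm.lam (bind_congr (fun n => by cases n <;> simp [shr, shs]) a)

theorem rename_bind (σ : Nat → Tm C) (f : Nat → Nat) (t : Tm C) :
    (t.bind σ).rename f = t.bind (fun n => (σ n).rename f) := by
  induction t generalizing f σ with
  | var n => rfl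
  | const c => rfl
  | app a b iha ihb => simp [iha, ihb]
  | lam a ih =>
      rw [bind_lam, rename_lam, bind_lam, ih]
      refine congrArg Tm.lam (bind_congr (fun n => ?_) a)
      cases n with
      | zero => rfl
      | succ m =>
          show ((σ m).lift).rename (shr f) = ((σ m).rename f).lift
          rw [lift, lift, rename_rename, rename_rename]
          exact rename_congr (fun n => rfl) _

theorem bind_bind (σ τ : Nat → Tm C) (t : Tm C) :
    (t.bind σ).bind τ = t.bind (fun n => (σ n).bind τ) := by
  induction t generalizing σ τ with
  | var n => rfl
  | const c => rfl
  | app a b iha ihb => simp [iha, ihb]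
  | lam a ih =>
      rw [bind_lam, bind_lam, bind_lam, ih]
      refine congrArg Tm.lam (bind_congr (fun n => ?_) a)
      cases n with
      | zero => rfl
      | succ m =>
          show ((σ m).lift).bind (shs τ) = ((σ m).bind τ).lift
          rw [lift, bind_rename, lift, rename_bind]
          exact bind_congr (fun n => rfl) _

theorem bind_var (t : Tm C) : t.bind Tm.var = t := by
  induction t with
  | var n => rfl
  | const c => rfl
  | app a b iha ihb => simp [iha, ihb]
  | lam a ih =>
      rw [bind_lam]
      refine congrArg Tm.lam (Eq.trans (bind_congr (fun n => ?_) a) ih)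
      cases n <;> rfl

theorem rename_eq_bind (f : Nat → Nat) (t : Tm C) :
    t.rename f = t.bind (fun n => .var (f n)) := by
  induction t generalizing f with
  | var n => rfl
  | const c => rfl
  | app a b iha ihb => simp [iha, ihb]
  | lam a ih =>
      rw [rename_lam, bind_lam, ih]
      exact congrArg Tm.lam (bind_congr (fun n => by cases n <;> rfl) a)

@[simp] theorem subst0_lift (t s : Tm C) : (t.lift).subst0 s = t := by
  rw [lift, subst0, bind_rename]
  exact Eq.trans (bind_congr (fun n => rfl) t) (bind_var t)

theorem lift_bind (t : Tm C) (σ : Nat → Tm C) : (t.lift).bind (shs σ) = (t.bind σ).lift := by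
  rw [lift, bind_rename, lift, rename_bind]
  exact bind_congr (fun n => rfl) t

theorem subst0_bind (t s : Tm C) (σ : Nat → Tm C) :
    (t.subst0 s).bind σ = (t.bind (shs σ)).subst0 (s.bind σ) := by
  rw [subst0, subst0, bind_bind, bind_bind]
  refine bind_congr (fun n => ?_) t
  cases n with
  | zero => rfl
  | succ m =>
      show σ m = ((σ m).lift).subst0 (s.bind σ)
      rw [subst0_lift]

/-- `Free k t` : the de Bruijn variable `k` occurs free in `t`. -/
def Free : Nat → Tm C → Prop
  | k, .var n => k = n
  | _, .const _ => False
  | k, .app a b => Free k a ∨ Free k b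
  | k, .lam a => Free (k + 1) a

theorem free_rename {f : Nat → Nat} {k : Nat} {t : Tm C} :
    Free k (t.rename f) ↔ ∃ m, Free m t ∧ f m = k := by
  induction t generalizing k f with
  | var n =>
      constructor
      · intro h; exact ⟨n, rfl, h.symm⟩
      · rintro ⟨m, rfl, h⟩; exact h.symm
  | const c => simp [rename_const, Free]
  | app a b iha ihb =>
      simp only [rename_app, Free, iha, ihb]
      constructor
      · rintro (⟨m, hm, hf⟩ | ⟨m, hm, hf⟩) <;> exact ⟨m, by tauto, hf⟩
      · rintro ⟨m, hm | hm, hf⟩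
        · exact Or.inl ⟨m, hm, hf⟩
        · exact Or.inr ⟨m, hm, hf⟩
  | lam a ih =>
      rw [rename_lam]
      show Free (k+1) (a.rename (shr f)) ↔ _
      rw [ih]
      constructor
      · rintro ⟨m, hm, hf⟩
        cases m with
        | zero => simp [shr] at hf
        | succ j =>
            simp only [shr] at hf
            exact ⟨j, hm, by omega⟩
      · rintro ⟨m, hm, hf⟩
        exact ⟨m + 1, hm, by simp [shr, hf]⟩

theorem not_free_lift (t : Tm C) : ¬ Free 0 (t.lift) := by
  rw [lift, free_rename]
  rintro ⟨m, _, h⟩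
  omega

theorem free_lift_succ {t : Tm C} {k : Nat} : Free (k+1) (t.lift) ↔ Free k t := by
  rw [lift, free_rename]
  constructor
  · rintro ⟨m, hm, h⟩; rwa [show m = k from by omega] at hm
  · intro h; exact ⟨k, h, rfl⟩

theorem free_bind {σ : Nat → Tm C} {k : Nat} {t : Tm C} :
    Free k (t.bind σ) ↔ ∃ m, Free m t ∧ Free k (σ m) := by
  induction t generalizing k σ with
  | var n =>
      constructor
      · intro h; exact ⟨n, rfl, h⟩
      · rintro ⟨m, rfl, h⟩; exact h
  | const c => simp [bind_const, Free]
  | app a b iha ihb =>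
      simp only [bind_app, Free, iha, ihb]
      constructor
      · rintro (⟨m, hm, hf⟩ | ⟨m, hm, hf⟩) <;> exact ⟨m, by tauto, hf⟩
      · rintro ⟨m, hm | hm, hf⟩
        · exact Or.inl ⟨m, hm, hf⟩
        · exact Or.inr ⟨m, hm, hf⟩
  | lam a ih =>
      rw [bind_lam]
      show Free (k+1) (a.bind (shs σ)) ↔ _
      rw [ih]
      constructor
      · rintro ⟨m, hm, hf⟩
        cases m with
        | zero => simp [shs, Free] at hf
        | succ j =>
            rw [show shs σ (j+1) = (σ j).lift from rfl, free_lift_succ] at hf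
            exact ⟨j, hm, hf⟩
      · rintro ⟨m, hm, hf⟩
        refine ⟨m + 1, hm, ?_⟩
        show Free (k+1) ((σ m).lift)
        rw [lift, free_rename]
        exact ⟨k, hf, rfl⟩

theorem bind_congr_free {σ σ' : Nat → Tm C} {t : Tm C}
    (h : ∀ n, Free n t → σ n = σ' n) : t.bind σ = t.bind σ' := by
  induction t generalizing σ σ' with
  | var n => exact h n rfl
  | const c => rfl
  | app a b iha ihb =>
      simp only [bind_app]
      rw [iha (fun n hn => h n (Or.inl hn)), ihb (fun n hn => h n (Or.inr hn))]
  | lam a ih =>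
      rw [bind_lam, bind_lam]
      refine congrArg Tm.lam (ih (fun n hn => ?_))
      cases n with
      | zero => rfl
      | succ m => show (σ m).lift = (σ' m).lift; rw [h m hn]

/-- A term is closed iff it has no free variables. -/
def Closed (t : Tm C) : Prop := ∀ k, ¬ Free k t

theorem Closed.bind_eq {t : Tm C} (h : Closed t) (σ : Nat → Tm C) : t.bind σ = t := by
  rw [bind_congr_free (σ' := Tm.var) (fun n hn => absurd hn (h n))]
  exact bind_var t

theorem Closed.rename_eq {t : Tm C} (h : Closed t) (f : Nat → Nat) : t.rename f = t := by
  rw [rename_eq_bind]; exact h.bind_eq _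

theorem Closed.lift_eq {t : Tm C} (h : Closed t) : t.lift = t := h.rename_eq _

theorem closed_const (c : C) : Closed (Tm.const c) := fun _ h => h
theorem Closed.app {a b : Tm C} (ha : Closed a) (hb : Closed b) : Closed (Tm.app a b) :=
  fun k h => h.elim (ha k) (hb k)
theorem Closed.lam_of {a : Tm C} (ha : Closed a) : Closed (Tm.lam a) := by
  intro k h
  show False
  have : Free (k+1) a := h
  exact ha _ this

/-- the renaming inserting a gap at `k` -/
def upren (k : Nat) (n : Nat) : Nat := if n < k then n else n + 1

theorem shr_upren (k : Nat) : ∀ n, shr (upren k) n = upren (k+1) n := by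
  intro n
  cases n with
  | zero => simp [shr, upren]
  | succ m => simp only [shr, upren]; split <;> split <;> omega

theorem lift_eq_upren (t : Tm C) : t.lift = t.rename (upren 0) := by
  rw [lift]; exact rename_congr (fun n => by simp [upren]) t

theorem exists_unrename {t : Tm C} {k : Nat} (h : ¬ Free k t) :
    ∃ y : Tm C, t = y.rename (upren k) := by
  induction t generalizing k with
  | var n =>
      have hk : k ≠ n := h
      by_cases hnk : n < k
      · exact ⟨Tm.var n, by simp [upren, hnk]⟩
      · refine ⟨Tm.var (n - 1), ?_⟩
        simp only [rename_var, upren]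
        rw [if_neg (by omega)]
        congr 1
        omega
  | const c => exact ⟨Tm.const c, rfl⟩
  | app a b iha ihb =>
      obtain ⟨ya, hya⟩ := iha (fun hf => h (Or.inl hf))
      obtain ⟨yb, hyb⟩ := ihb (fun hf => h (Or.inr hf))
      exact ⟨Tm.app ya yb, by simp [hya, hyb]⟩
  | lam a ih =>
      obtain ⟨y, hy⟩ := ih (k := k + 1) h
      refine ⟨Tm.lam y, ?_⟩
      rw [rename_lam, hy]
      exact congrArg Tm.lam (rename_congr (fun n => shr_upren k n) y).symm

theorem exists_unlift {t : Tm C} (h : ¬ Free 0 t) : ∃ y : Tm C, t = y.lift := by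
  obtain ⟨y, hy⟩ := exists_unrename h
  exact ⟨y, by rw [hy, lift_eq_upren]⟩

theorem shr_injective {f : Nat → Nat} (hf : Function.Injective f) :
    Function.Injective (Tm.shr f) := by
  intro x y e
  cases x with
  | zero => cases y with
      | zero => rfl
      | succ m => simp [shr] at e
  | succ n => cases y with
      | zero => simp [shr] at e
      | succ m =>
          simp only [shr] at e
          have : f n = f m := by omega
          rw [hf this]

theorem rename_injective {f : Nat → Nat} (hf : Function.Injective f) :
    Function.Injective (Tm.rename (C := C) f) := by
  intro s t h
  induction s generalizing t f with
  | var n =>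
      cases t with
      | var m => have : f n = f m := by simpa using h
                 rw [hf this]
      | const c => exact absurd h (by simp)
      | app a b => exact absurd h (by simp)
      | lam a => exact absurd h (by simp [rename_lam])
  | const c =>
      cases t with
      | const c' => simpa using h
      | var m => exact absurd h (by simp)
      | app a b => exact absurd h (by simp)
      | lam a => exact absurd h (by simp [rename_lam])
  | app a b iha ihb =>
      cases t with
      | app a' b' =>
          obtain ⟨h1, h2⟩ : a.rename f = a'.rename f ∧ b.rename f = b'.rename f := by
            simpa using h
          rw [iha hf h1, ihb hf h2]
      | var m => exact absurd h (by simp)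
      | const c => exact absurd h (by simp)
      | lam a' => exact absurd h (by simp [rename_lam])
  | lam a ih =>
      cases t with
      | lam a' =>
          have h' : a.rename (shr f) = a'.rename (shr f) := by
            simpa [rename_lam] using h
          rw [ih (shr_injective hf) h']
      | var m => exact absurd h (by simp [rename_lam])
      | const c => exact absurd h (by simp [rename_lam])
      | app x y => exact absurd h (by simp [rename_lam])

theorem lift_injective : Function.Injective (Tm.lift (C := C)) :=
  fun s t h => rename_injective (fun a b => by omega) h

/-- maximal free variable bound -/
def maxV : Tm C → Nat
  | .var n => n + 1
  | .const _ => 0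
  | .app a b => max (maxV a) (maxV b)
  | .lam a => maxV a

theorem free_lt_maxV {t : Tm C} {k : Nat} (h : Free k t) : k < maxV t := by
  induction t generalizing k with
  | var n => have : k = n := h; simp [maxV, this]
  | const c => exact absurd h (fun h => h)
  | app a b iha ihb =>
      rcases h with h | h
      · exact lt_of_lt_of_le (iha h) (le_max_left _ _)
      · exact lt_of_lt_of_le (ihb h) (le_max_right _ _)
  | lam a ih =>
      have : Free (k+1) a := h
      have := ih this
      simp [maxV]; omega

theorem exists_fresh (t : Tm C) : ∃ k, ¬ Free k t :=
  ⟨maxV t, fun h => absurd (free_lt_maxV h) (by omega)⟩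

end Tm
theorem IsT1.ne_omega {B : Type} {τ : ETy B} (h : IsT1 τ) : τ ≠ .omega := by
  cases h <;> simp
theorem IsT1.ne_eps {B : Type} {τ : ETy B} (h : IsT1 τ) : τ ≠ .eps := by
  cases h <;> simp
theorem IsT1.arr_inv {B : Type} {τ1 τ2 : ETy B} (h : IsT1 (.arr τ1 τ2)) :
    (IsT1 τ1 ∨ τ1 = .omega) ∧ IsT1 τ2 := by
  cases h with
  | arr h1 h2 => exact ⟨Or.inl h1, h2⟩
  | omegaArr h2 => exact ⟨Or.inr rfl, h2⟩

theorem arrN_omega_right {B : Type} (τ1 : ETy B) : arrN τ1 .omega = .omega := by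
  cases τ1 <;> rfl
theorem arrN_eps_right {B : Type} {τ1 : ETy B} (h : τ1 ≠ .eps) : arrN τ1 .eps = .eps := by
  cases τ1 <;> simp_all [arrN]
theorem arrN_eps_left {B : Type} {τ2 : ETy B} (h : τ2 ≠ .omega) : arrN .eps τ2 = .omega := by
  cases τ2 <;> simp_all [arrN]
theorem arrN_plain {B : Type} {τ1 τ2 : ETy B} (h1 : τ1 ≠ .eps) (h2 : τ2 ≠ .omega)
    (h3 : τ2 ≠ .eps) : arrN τ1 τ2 = .arr τ1 τ2 := by
  cases τ1 <;> cases τ2 <;> simp_all [arrN]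

theorem arrN_isTp {B : Type} {τ1 τ2 : ETy B} (h1 : IsTp τ1) (h2 : IsTp τ2) :
    IsTp (arrN τ1 τ2) := by
  by_cases e2 : τ2 = .omega
  · subst e2; rw [arrN_omega_right]; exact Or.inr (Or.inl rfl)
  by_cases e1 : τ1 = .eps
  · subst e1; rw [arrN_eps_left e2]; exact Or.inr (Or.inl rfl)
  by_cases e3 : τ2 = .eps
  · subst e3; rw [arrN_eps_right e1]; exact Or.inr (Or.inr rfl)
  rw [arrN_plain e1 e2 e3]
  rcases h2 with h2 | h2 | h2
  · rcases h1 with h1 | h1 | h1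
    · exact Or.inl (IsT1.arr h1 h2)
    · subst h1; exact Or.inl (IsT1.omegaArr h2)
    · exact absurd h1 e1
  · exact absurd h2 e2
  · exact absurd h2 e3

namespace CanSys

variable {B : Type} {D : B → Type} {S : CanSys B D}

theorem TT_arr_isT1 {τ1 τ2 : ETy B} {ρ : Tm S.C} (h : ρ ∈ S.TT (.arr τ1 τ2)) :
    IsT1 (.arr τ1 τ2) := by
  by_contra hn
  rw [S.TT_invalid _ hn (by simp)] at h
  exact h

theorem TT_closed {τ : ETy B} (hτ : IsT1 τ) {ρ : Tm S.C} (h : ρ ∈ S.TT τ) :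
    Tm.Closed ρ := by
  induction hτ generalizing ρ with
  | o =>
      obtain ⟨c, rfl⟩ := S.TT_const _ IsT1.o (by simp) _ h
      exact Tm.closed_const c
  | base b =>
      obtain ⟨c, rfl⟩ := S.TT_const _ (IsT1.base b) (by simp) _ h
      exact Tm.closed_const c
  | arr h1 h2 ih1 ih2 =>
      obtain ⟨c, rfl⟩ := S.TT_const _ (IsT1.arr h1 h2)
        (by intro τ2' he; rw [ETy.arr.injEq] at he; exact h1.ne_omega he.1) _ h
      exact Tm.closed_const c
  | omegaArr h2 ih2 =>
      rw [S.TT_omega_arr _ h2] at h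
      obtain ⟨ρ2, hρ2, rfl⟩ := h
      exact Tm.Closed.lam_of (by
        intro k hk
        exact (ih2 hρ2) k hk)

theorem TT_closed' {τ : ETy B} (hτ : τ ≠ .omega) {ρ : Tm S.C} (h : ρ ∈ S.TT τ) :
    Tm.Closed ρ := by
  by_cases h1 : IsT1 τ
  · exact TT_closed h1 h
  · rw [S.TT_invalid _ h1 hτ] at h; exact absurd h (by simp)

theorem mem_TT_bind {τ : ETy B} {ρ : Tm S.C} (h : ρ ∈ S.TT τ) (σ : Nat → Tm S.C) :
    ρ.bind σ ∈ S.TT τ := by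
  by_cases hτ : τ = .omega
  · subst hτ; rw [S.TT_omega]; trivial
  · rw [(TT_closed' hτ h).bind_eq]; exact h

theorem top_mem : S.top ∈ S.TT .o := by rw [S.TT_o]; exact Or.inl rfl
theorem bot_mem : S.bot ∈ S.TT .o := by rw [S.TT_o]; exact Or.inr rfl
theorem top_closed : Tm.Closed S.top := TT_closed IsT1.o top_mem
theorem bot_closed : Tm.Closed S.bot := TT_closed IsT1.o bot_mem

theorem TT_nonempty (hD : ∀ b, Nonempty (D b)) {τ : ETy B} (hτ : IsT1 τ) :
    ∃ ρ : Tm S.C, ρ ∈ S.TT τ := by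
  induction hτ with
  | o => exact ⟨S.top, top_mem⟩
  | base b =>
      obtain ⟨e⟩ := S.TT_base_equiv b
      obtain ⟨d⟩ := hD b
      exact ⟨e d, (e d).2⟩
  | arr h1 h2 ih1 ih2 =>
      obtain ⟨ρ2, hρ2⟩ := ih2
      obtain ⟨ρ, hρ, _⟩ := S.F_full _ _ (IsT1.arr h1 h2) h1.ne_omega (fun _ => ρ2)
        (fun _ _ => hρ2)
      exact ⟨ρ, hρ⟩
  | omegaArr h2 ih2 =>
      obtain ⟨ρ2, hρ2⟩ := ih2
      exact ⟨Tm.lam ρ2, by rw [S.TT_omega_arr _ h2]; exact ⟨ρ2, hρ2, rfl⟩⟩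

theorem TT_nonempty' (hD : ∀ b, Nonempty (D b)) {τ : ETy B} (hτ : IsTp τ) (hε : τ ≠ .eps) :
    ∃ ρ : Tm S.C, ρ ∈ S.TT τ := by
  rcases hτ with h | h | h
  · exact TT_nonempty hD h
  · subst h; exact ⟨S.top, by rw [S.TT_omega]; trivial⟩
  · exact absurd h hε

/-! ### computations on the distinguished terms -/

theorem XiT_closed : Tm.Closed S.XiT := Tm.closed_const _
theorem LT_closed : Tm.Closed S.LT := Tm.closed_const _
theorem AT_closed (b : B) : Tm.Closed (S.AT b) := Tm.closed_const _

theorem Hterm_closed : Tm.Closed (S.Hterm) := by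
  intro k hk
  have h1 : Tm.Free (k+1) (Tm.app S.LT (Tm.lam (Tm.var 1))) := hk
  rcases h1 with h | h
  · exact h
  · have : k + 2 = 1 := h
    omega

theorem Kt_bind (t : Tm S.C) (σ : Nat → Tm S.C) : (S.Kt t).bind σ = S.Kt (t.bind σ) := by
  show Tm.lam (t.lift.bind (Tm.shs σ)) = _
  rw [Tm.lift_bind]; rfl

theorem Ht_bind (t : Tm S.C) (σ : Nat → Tm S.C) : (S.Ht t).bind σ = S.Ht (t.bind σ) := by
  show Tm.app S.LT ((S.Kt t).bind σ) = _
  rw [Kt_bind]; rfl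

theorem Kt_injective {t s : Tm S.C} (h : S.Kt t = S.Kt s) : t = s := by
  have : t.lift = s.lift := by
    have := congrArg (fun x => match x with | Tm.lam a => a | x => x) h
    simpa [Kt] using this
  exact Tm.lift_injective this

theorem Kt_ne_Hterm (t : Tm S.C) : S.Kt t ≠ S.Hterm := by
  intro h
  have : t.lift = Tm.app S.LT (Tm.lam (Tm.var 1)) := by
    have := congrArg (fun x => match x with | Tm.lam a => a | x => x) h
    simpa [Kt, Hterm] using this
  have hfree : Tm.Free 0 (Tm.app S.LT (Tm.lam (Tm.var (C := S.C) 1))) :=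
    Or.inr (show (1 : Nat) = 1 from rfl)
  rw [← this] at hfree
  exact Tm.not_free_lift t hfree

/-- the substitution used in the `λ`-branch of `Ft` -/
def sq : Nat → Tm S.C := fun n =>
  match n with
  | 0 => Tm.app (Tm.var 1) (Tm.var 0)
  | m + 1 => Tm.var (m + 2)

/-- the "body" of `F t₁ t₂` as a function of `t₂` -/
def Mof (b : Tm S.C) : Tm S.C :=
  match b with
  | .lam q => .lam (q.bind sq)
  | b => .lam (.app b.lift.lift (.app (.var 1) (.var 0)))

theorem Ft_eq (a b : Tm S.C) : S.Ft a b = .lam (.app (.app S.XiT a.lift) (Mof b)) := by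
  cases b <;> rfl

/-- η-expansion -/
def etaE (t : Tm S.C) : Tm S.C := .lam (.app t.lift (.var 0))

theorem lift_bind_sq (u : Tm S.C) : u.lift.bind sq = u.lift.lift := by
  show (u.rename (· + 1)).bind sq = ((u.rename (· + 1)).rename (· + 1))
  rw [Tm.bind_rename, Tm.rename_rename, Tm.rename_eq_bind]
  exact Tm.bind_congr (fun n => rfl) u

theorem Mof_etaE (t : Tm S.C) : Mof (etaE t) = .lam (.app t.lift.lift (.app (.var 1) (.var 0))) := by
  show Tm.lam ((Tm.app t.lift (Tm.var 0)).bind sq) = _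
  rw [Tm.bind_app, lift_bind_sq]
  rfl

theorem Mof_lam_bind (q : Tm S.C) (σ : Nat → Tm S.C) :
    (Mof (.lam q)).bind (Tm.shs σ) = Mof ((Tm.lam q).bind σ) := by
  show Tm.lam ((q.bind sq).bind (Tm.shs (Tm.shs σ))) = Tm.lam ((q.bind (Tm.shs σ)).bind sq)
  rw [Tm.bind_bind, Tm.bind_bind]
  refine congrArg Tm.lam (Tm.bind_congr (fun n => ?_) q)
  cases n with
  | zero => rfl
  | succ m =>
      show (Tm.var (m+2)).bind (Tm.shs (Tm.shs σ)) = ((Tm.shs σ) (m+1)).bind sq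
      show ((Tm.shs σ) (m+1)).lift = ((σ m).lift).bind sq
      rw [lift_bind_sq]
      rfl

theorem Mof_nonlam_bind (b : Tm S.C) (hb : ∀ q, b ≠ .lam q) (σ : Nat → Tm S.C) :
    (Mof b).bind (Tm.shs σ) = .lam (.app (b.bind σ).lift.lift (.app (.var 1) (.var 0))) := by
  have hform : Mof b = .lam (.app b.lift.lift (.app (.var 1) (.var 0))) := by
    cases b <;> first | rfl | exact absurd rfl (hb _)
  rw [hform]
  show Tm.lam (Tm.app (b.lift.lift.bind (Tm.shs (Tm.shs σ)))
      ((Tm.app (Tm.var 1) (Tm.var 0)).bind (Tm.shs (Tm.shs σ)))) = _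
  rw [Tm.lift_bind, Tm.lift_bind]
  rfl

theorem Ft_bind_lam (a q : Tm S.C) (σ : Nat → Tm S.C) :
    (S.Ft a (.lam q)).bind σ = S.Ft (a.bind σ) ((Tm.lam q).bind σ) := by
  rw [Ft_eq, Ft_eq]
  show Tm.lam (Tm.app (Tm.app (S.XiT.bind (Tm.shs σ)) (a.lift.bind (Tm.shs σ)))
    ((Mof (.lam q)).bind (Tm.shs σ))) = _
  rw [Tm.lift_bind, Mof_lam_bind]
  rfl

theorem Ft_bind_nonlam (a b : Tm S.C) (hb : ∀ q, b ≠ .lam q) (σ : Nat → Tm S.C) :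
    (S.Ft a b).bind σ = S.Ft (a.bind σ) (etaE (b.bind σ)) := by
  rw [Ft_eq, Ft_eq, Mof_etaE]
  show Tm.lam (Tm.app (Tm.app (S.XiT.bind (Tm.shs σ)) (a.lift.bind (Tm.shs σ)))
    ((Mof b).bind (Tm.shs σ))) = _
  rw [Tm.lift_bind, Mof_nonlam_bind b hb]
  rfl

end CanSys
section IndPrinciples
variable {B : Type} {D : B → Type} {S : CanSys B D}

/-- Custom structural induction for `Step` alone. -/
theorem step_ind {P : Ordinal.{0} → Tm S.C → Tm S.C → Prop}
    (beta : ∀ (α : Ordinal.{0}) (t s : Tm S.C), P α (.app (.lam t) s) (t.subst0 s))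
    (eta : ∀ (α : Ordinal.{0}) (t : Tm S.C), P α (.lam (.app t.lift (.var 0))) t)
    (crule : ∀ {α γ : Ordinal.{0}}, γ < α → ∀ {τ1 τ2 : ETy B}, τ1 ≠ .omega →
      ∀ {c : Tm S.C}, c ∈ S.TT (.arr τ1 τ2) → ∀ {ρ1 : Tm S.C}, ρ1 ∈ S.TT τ1 →
      ∀ {t : Tm S.C}, Succ S γ t ρ1 → P α (.app c t) (S.F τ1 τ2 c ρ1))
    (appL : ∀ {α : Ordinal.{0}} {t t' : Tm S.C} (s : Tm S.C), Step S α t t' →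
      P α t t' → P α (.app t s) (.app t' s))
    (appR : ∀ (t : Tm S.C) {α : Ordinal.{0}} {s s' : Tm S.C}, Step S α s s' →
      P α s s' → P α (.app t s) (.app t s'))
    (lam : ∀ {α : Ordinal.{0}} {t t' : Tm S.C}, Step S α t t' →
      P α t t' → P α (.lam t) (.lam t'))
    {α : Ordinal.{0}} {t s : Tm S.C} (h : Step S α t s) : P α t s := by
  refine Step.rec (motive_1 := fun α t s _ => P α t s)
    (motive_2 := fun _ _ _ _ => True) (motive_3 := fun _ _ _ _ => True)
    (motive_4 := fun _ _ _ _ => True) (motive_5 := fun _ _ _ _ => True)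
    (motive_6 := fun _ _ _ _ => True)
    ?_ ?_ ?_ ?_ ?_ ?_ ?_ ?_ ?_ ?_ ?_ ?_ ?_ ?_ ?_ ?_ ?_ ?_ ?_ ?_ ?_ ?_ ?_ ?_ ?_ ?_ ?_ ?_ h
  · exact beta
  · exact eta
  · intro α γ hγ τ1 τ2 h1 c hc ρ1 hρ1 t hs _
    exact crule hγ h1 hc hρ1 hs
  · intro α t t' s hst ih
    exact appL s hst ih
  · intro t α s s' hss ih
    exact appR t hss ih
  · intro α t t' htt ih
    exact lam htt ih
  all_goals intros; trivial

/-- Custom chain induction for `Steps` alone. -/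
theorem steps_ind {P : Ordinal.{0} → Tm S.C → Tm S.C → Prop}
    (refl : ∀ (α : Ordinal.{0}) (t : Tm S.C), P α t t)
    (tail : ∀ {α : Ordinal.{0}} {t u v : Tm S.C}, Steps S α t u → Step S α u v →
      P α t u → P α t v)
    {α : Ordinal.{0}} {t s : Tm S.C} (h : Steps S α t s) : P α t s := by
  refine Steps.rec (motive_2 := fun α t s _ => P α t s)
    (motive_1 := fun _ _ _ _ => True) (motive_3 := fun _ _ _ _ => True)
    (motive_4 := fun _ _ _ _ => True) (motive_5 := fun _ _ _ _ => True)
    (motive_6 := fun _ _ _ _ => True)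
    ?_ ?_ ?_ ?_ ?_ ?_ ?_ ?_ ?_ ?_ ?_ ?_ ?_ ?_ ?_ ?_ ?_ ?_ ?_ ?_ ?_ ?_ ?_ ?_ ?_ ?_ ?_ ?_ h
  · intros; trivial
  · intros; trivial
  · intros; trivial
  · intros; trivial
  · intros; trivial
  · intros; trivial
  · exact refl
  · intro α t u v hsteps hstep ih _
    exact tail hsteps hstep ih
  all_goals intros; trivial

end IndPrinciples
section RedUtils
variable {B : Type} {D : B → Type} {S : CanSys B D}

theorem steps_single {α : Ordinal.{0}} {t s : Tm S.C} (h : Step S α t s) : Steps S α t s :=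
  Steps.tail (Steps.refl α t) h

theorem steps_trans {α : Ordinal.{0}} {t u v : Tm S.C} (h1 : Steps S α t u)
    (h2 : Steps S α u v) : Steps S α t v := by
  refine steps_ind (P := fun α' u' v' => ∀ t', Steps S α' t' u' → Steps S α' t' v')
    (fun _ _ _ h => h) ?_ h2 t h1
  intro α' u' v' w' _ hstep ih t' h'
  exact Steps.tail (ih t' h') hstep

theorem steps_appL {α : Ordinal.{0}} {t t' : Tm S.C} (s : Tm S.C) (h : Steps S α t t') :
    Steps S α (.app t s) (.app t' s) := by
  refine steps_ind (P := fun α' u v => Steps S α' (.app u s) (.app v s))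
    (fun α' u => Steps.refl _ _) ?_ h
  intro α' u v w _ hstep ih
  exact Steps.tail ih (Step.appL s hstep)

theorem steps_appR {α : Ordinal.{0}} (t : Tm S.C) {s s' : Tm S.C} (h : Steps S α s s') :
    Steps S α (.app t s) (.app t s') := by
  refine steps_ind (P := fun α' u v => Steps S α' (.app t u) (.app t v))
    (fun α' u => Steps.refl _ _) ?_ h
  intro α' u v w _ hstep ih
  exact Steps.tail ih (Step.appR t hstep)

theorem steps_lam {α : Ordinal.{0}} {t t' : Tm S.C} (h : Steps S α t t') :
    Steps S α (.lam t) (.lam t') := by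
  refine steps_ind (P := fun α' u v => Steps S α' (.lam u) (.lam v))
    (fun α' u => Steps.refl _ _) ?_ h
  intro α' u v w _ hstep ih
  exact Steps.tail ih (Step.lam hstep)

theorem step_mono {α α' : Ordinal.{0}} (hle : α ≤ α') {t s : Tm S.C} (h : Step S α t s) :
    Step S α' t s := by
  refine step_ind (P := fun β u v => ∀ β', β ≤ β' → Step S β' u v)
    (fun β u v β' _ => Step.beta β' u v) (fun β u β' _ => Step.eta β' u)
    ?_ ?_ ?_ ?_ h α' hle
  · intro β γ hγ τ1 τ2 h1 c hc ρ1 hρ1 u hs β' hb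
    exact Step.crule (lt_of_lt_of_le hγ hb) h1 hc hρ1 hs
  · intro β u u' s' _ ih β' hb
    exact Step.appL s' (ih β' hb)
  · intro u β s1 s2 _ ih β' hb
    exact Step.appR u (ih β' hb)
  · intro β u u' _ ih β' hb
    exact Step.lam (ih β' hb)

theorem steps_mono {α α' : Ordinal.{0}} (hle : α ≤ α') {t s : Tm S.C} (h : Steps S α t s) :
    Steps S α' t s := by
  refine steps_ind (P := fun β u v => ∀ β', β ≤ β' → Steps S β' u v)
    (fun β u β' _ => Steps.refl β' u) ?_ h α' hle
  intro β u v w _ hstep ih β' hb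
  exact Steps.tail (ih β' hb) (step_mono hb hstep)

theorem leadLt_mono {α α' : Ordinal.{0}} (hle : α ≤ α') {t ρ : Tm S.C}
    (h : LeadLt S α t ρ) : LeadLt S α' t ρ := by
  cases h with
  | mk hγ hl => exact LeadLt.mk (lt_of_lt_of_le hγ hle) hl

theorem sim_mono {α α' : Ordinal.{0}} (hle : α ≤ α') {t : Tm S.C} {τ : ETy B}
    (h : Sim S α t τ) : Sim S α' t τ := by
  cases h with
  | ofA => exact Sim.ofA α' _
  | ofH => exact Sim.ofH α'
  | ofKom h1 => exact Sim.ofKom (leadLt_mono hle h1)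
  | ofKeps h1 => exact Sim.ofKeps (leadLt_mono hle h1)
  | ofF h1 h2 hs1 hs2 =>
      exact Sim.ofF (lt_of_lt_of_le h1 hle) (lt_of_lt_of_le h2 hle) hs1 hs2
  | ofFom hγ hs1 => exact Sim.ofFom (lt_of_lt_of_le hγ hle) hs1

theorem succ_mono {α α' : Ordinal.{0}} (hle : α ≤ α') {t ρ : Tm S.C}
    (h : Succ S α t ρ) : Succ S α' t ρ := by
  cases h with
  | refl hτ hρ => exact Succ.refl hτ hρ α'
  | fn hρ h1 => exact Succ.fn hρ (fun t1 ht1 => leadLt_mono hle (h1 t1 ht1))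
  | topLA => exact Succ.topLA α' _
  | topLH => exact Succ.topLH α'
  | topA hc => exact Succ.topA hc α'
  | topH hc => exact Succ.topH hc α'
  | xiTop hα h1 h2 =>
      exact Succ.xiTop (lt_of_lt_of_le hα hle) (sim_mono hle h1)
        (fun t3 ht3 => leadLt_mono hle (h2 t3 ht3))
  | xiHTop hα h1 h2 =>
      exact Succ.xiHTop (lt_of_lt_of_le hα hle) (sim_mono hle h1)
        (fun t3 ht3 => leadLt_mono hle (h2 t3 ht3))
  | flTopEps hα h1 => exact Succ.flTopEps (lt_of_lt_of_le hα hle) (sim_mono hle h1)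
  | flTop hα hτ h1 h2 =>
      exact Succ.flTop (lt_of_lt_of_le hα hle) hτ (sim_mono hle h1) (leadLt_mono hle h2)
  | hiTop hα h1 => exact Succ.hiTop (lt_of_lt_of_le hα hle) (leadLt_mono hle h1)
  | xiBot hα hγ hH h1 h3 hb =>
      exact Succ.xiBot (lt_of_lt_of_le hα hle) (lt_of_lt_of_le hγ hle) hH
        (sim_mono hle h1) h3 (leadLt_mono hle hb)

theorem lead_mono {α α' : Ordinal.{0}} (hle : α ≤ α') {t ρ : Tm S.C}
    (h : Lead S α t ρ) : Lead S α' t ρ := by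
  cases h with
  | mk hsteps hsucc => exact Lead.mk (steps_mono hle hsteps) (succ_mono hle hsucc)

theorem lead_steps {α : Ordinal.{0}} {t u ρ : Tm S.C} (h1 : Steps S α t u)
    (h2 : Lead S α u ρ) : Lead S α t ρ := by
  cases h2 with
  | mk hsteps hsucc => exact Lead.mk (steps_trans h1 hsteps) hsucc

/-! ### conversion to the stable level -/

theorem stepsR_of_steps {α : Ordinal.{0}} {t s : Tm S.C} (h : Steps S α t s) :
    StepsR S t s := by
  refine steps_ind (P := fun α' u v => StepsR S u v)
    (fun _ u => Relation.ReflTransGen.refl) ?_ h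
  intro α' u v w _ hstep ih
  exact Relation.ReflTransGen.tail ih ⟨α', hstep⟩

theorem stepsR_to_steps {t s : Tm S.C} (h : StepsR S t s) : ∃ α : Ordinal.{0}, Steps S α t s := by
  induction h with
  | refl => exact ⟨0, Steps.refl 0 t⟩
  | tail _ hstep ih =>
      obtain ⟨α, hα⟩ := ih
      obtain ⟨β, hβ⟩ := hstep
      exact ⟨max α β, Steps.tail (steps_mono (le_max_left _ _) hα)
        (step_mono (le_max_right _ _) hβ)⟩

theorem leadR_iff {t ρ : Tm S.C} : LeadR S t ρ ↔ ∃ α : Ordinal.{0}, Lead S α t ρ := by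
  constructor
  · rintro ⟨t', hsteps, α, hsucc⟩
    obtain ⟨β, hβ⟩ := stepsR_to_steps hsteps
    exact ⟨max β α, Lead.mk (steps_mono (le_max_left _ _) hβ)
      (succ_mono (le_max_right _ _) hsucc)⟩
  · rintro ⟨α, hsteps, hsucc⟩
    exact ⟨_, stepsR_of_steps hsteps, α, hsucc⟩

theorem leadR_of_lead {α : Ordinal.{0}} {t ρ : Tm S.C} (h : Lead S α t ρ) : LeadR S t ρ :=
  leadR_iff.2 ⟨α, h⟩

theorem leadR_of_succ {α : Ordinal.{0}} {t ρ : Tm S.C} (h : Succ S α t ρ) : LeadR S t ρ :=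
  leadR_of_lead (Lead.mk (Steps.refl α t) h)

theorem leadR_stepsR {t u ρ : Tm S.C} (h1 : StepsR S t u) (h2 : LeadR S u ρ) :
    LeadR S t ρ := by
  obtain ⟨t', hsteps, hsucc⟩ := h2
  exact ⟨t', Relation.ReflTransGen.trans h1 hsteps, hsucc⟩

theorem leadLt_of_leadR {t ρ : Tm S.C} (h : LeadR S t ρ) :
    ∃ α : Ordinal.{0}, ∀ α', α < α' → LeadLt S α' t ρ := by
  obtain ⟨α, hα⟩ := leadR_iff.1 h
  exact ⟨α, fun α' h' => LeadLt.mk h' hα⟩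

theorem leadR_of_leadLt {α : Ordinal.{0}} {t ρ : Tm S.C} (h : LeadLt S α t ρ) :
    LeadR S t ρ := by
  cases h with
  | mk hγ hl => exact leadR_of_lead hl

/-- no reduction из a constant -/
theorem step_const {α : Ordinal.{0}} {c : S.C} {s : Tm S.C}
    (h : Step S α (.const c) s) : False := by
  cases h

theorem stepR_appL {t t' : Tm S.C} (s : Tm S.C) (h : StepsR S t t') :
    StepsR S (.app t s) (.app t' s) := by
  induction h with
  | refl => exact Relation.ReflTransGen.refl
  | tail _ hstep ih =>
      obtain ⟨α, hα⟩ := hstep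
      exact Relation.ReflTransGen.tail ih ⟨α, Step.appL s hα⟩

theorem stepR_appR (t : Tm S.C) {s s' : Tm S.C} (h : StepsR S s s') :
    StepsR S (.app t s) (.app t s') := by
  induction h with
  | refl => exact Relation.ReflTransGen.refl
  | tail _ hstep ih =>
      obtain ⟨α, hα⟩ := hstep
      exact Relation.ReflTransGen.tail ih ⟨α, Step.appR t hα⟩

theorem stepR_lam {s s' : Tm S.C} (h : StepsR S s s') :
    StepsR S (.lam s) (.lam s') := by
  induction h with
  | refl => exact Relation.ReflTransGen.refl
  | tail _ hstep ih =>
      obtain ⟨α, hα⟩ := hstep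
      exact Relation.ReflTransGen.tail ih ⟨α, Step.lam hα⟩

end RedUtils
section Master
variable {B : Type} {D : B → Type} {S : CanSys B D}
open CanSys

theorem sim_shape {α : Ordinal.{0}} {t : Tm S.C} {τ : ETy B} (h : Sim S α t τ) :
    (∃ b, t = S.AT b) ∨ t = S.Hterm ∨ (∃ w, t = S.Kt w) ∨ ∃ a b, t = S.Ft a b := by
  cases h with
  | ofA => exact Or.inl ⟨_, rfl⟩
  | ofH => exact Or.inr (Or.inl rfl)
  | ofKom _ => exact Or.inr (Or.inr (Or.inl ⟨_, rfl⟩))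
  | ofKeps _ => exact Or.inr (Or.inr (Or.inl ⟨_, rfl⟩))
  | ofF _ _ _ _ => exact Or.inr (Or.inr (Or.inr ⟨_, _, rfl⟩))
  | ofFom _ _ => exact Or.inr (Or.inr (Or.inr ⟨_, _, rfl⟩))

theorem leadLt_prepend_eta {α : Ordinal.{0}} {u B' ρ : Tm S.C}
    (h : LeadLt S α (.app u B') ρ) : LeadLt S α (.app u (etaE B')) ρ := by
  cases h with
  | mk hγ hl =>
      exact LeadLt.mk hγ (lead_steps (steps_single (Step.appR u (Step.eta _ B'))) hl)

theorem steps_bind {α : Ordinal.{0}} {t s : Tm S.C} (h : Steps S α t s) (σ : Nat → Tm S.C) :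
    Steps S α (t.bind σ) (s.bind σ) := by
  refine Steps.rec
    (motive_1 := fun α t s _ => ∀ σ : Nat → Tm S.C, Step S α (t.bind σ) (s.bind σ))
    (motive_2 := fun α t s _ => ∀ σ : Nat → Tm S.C, Steps S α (t.bind σ) (s.bind σ))
    (motive_3 := fun α t ρ _ => ∀ σ : Nat → Tm S.C, Lead S α (t.bind σ) (ρ.bind σ))
    (motive_4 := fun α t ρ _ => ∀ σ : Nat → Tm S.C, LeadLt S α (t.bind σ) (ρ.bind σ))
    (motive_5 := fun α t τ _ => ∀ σ : Nat → Tm S.C, Sim S α (t.bind σ) τ)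
    (motive_6 := fun α t ρ _ => ∀ σ : Nat → Tm S.C, Succ S α (t.bind σ) (ρ.bind σ))
    ?beta ?eta ?crule ?appL ?appR ?lam ?refl ?tail ?leadmk ?leadltmk
    ?ofA ?ofH ?ofKom ?ofKeps ?ofF ?ofFom
    ?srefl ?fn ?topLA ?topLH ?topA ?topH ?xiTop ?xiHTop ?flTopEps ?flTop ?hiTop ?xiBot h σ
  case beta =>
    intro α t s σ
    rw [Tm.subst0_bind]
    exact Step.beta α (t.bind (Tm.shs σ)) (s.bind σ)
  case eta =>
    intro α t σ
    have e : (Tm.lam (.app t.lift (.var 0))).bind σ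
        = Tm.lam (.app (t.bind σ).lift (.var 0)) := by
      rw [Tm.bind_lam, Tm.bind_app, Tm.lift_bind]; rfl
    rw [e]
    exact Step.eta α (t.bind σ)
  case crule =>
    intro α γ hγ τ1 τ2 h1 c hc ρ1 hρ1 t hs ih σ
    have hIs : IsT1 (.arr τ1 τ2) := TT_arr_isT1 hc
    have hτ1 : IsT1 τ1 := hIs.arr_inv.1.resolve_right h1
    have hτ2 : IsT1 τ2 := hIs.arr_inv.2
    have hsb := ih σ
    rw [(TT_closed hτ1 hρ1).bind_eq] at hsb
    have e : (Tm.app c t).bind σ = .app c (t.bind σ) := by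
      rw [Tm.bind_app, (TT_closed hIs hc).bind_eq]
    rw [e, (TT_closed hτ2 (S.F_mapsto _ _ hIs _ hc _ hρ1)).bind_eq]
    exact Step.crule hγ h1 hc hρ1 hsb
  case appL =>
    intro α t t' s _ ih σ
    exact Step.appL (s.bind σ) (ih σ)
  case appR =>
    intro t α s s' _ ih σ
    exact Step.appR (t.bind σ) (ih σ)
  case lam =>
    intro α t t' _ ih σ
    exact Step.lam (ih (Tm.shs σ))
  case refl => intro α t σ; exact Steps.refl α (t.bind σ)
  case tail =>
    intro α t u v _ _ ihs ih1 σ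
    exact Steps.tail (ihs σ) (ih1 σ)
  case leadmk =>
    intro α t t' ρ _ _ ihs ihsucc σ
    exact Lead.mk (ihs σ) (ihsucc σ)
  case leadltmk =>
    intro α γ t ρ hγ _ ih σ
    exact LeadLt.mk hγ (ih σ)
  case ofA => intro α b σ; exact Sim.ofA α b
  case ofH => intro α σ; exact Sim.ofH α
  case ofKom =>
    intro α t _ ih σ
    have := ih σ
    rw [top_closed.bind_eq] at this
    rw [Kt_bind]
    exact Sim.ofKom this
  case ofKeps =>
    intro α t _ ih σ
    have := ih σ
    rw [bot_closed.bind_eq] at this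
    rw [Kt_bind]
    exact Sim.ofKeps this
  case ofF =>
    intro α γ1 γ2 h1 h2 t1 t2 τ1 τ2 hs1 hs2 ih1 ih2 σ
    rcases sim_shape hs2 with ⟨b, he⟩ | he | ⟨w, he⟩ | ⟨a', b', he⟩
    · subst he
      have e : (S.Ft t1 (S.AT b)).bind σ = S.Ft (t1.bind σ) (S.AT b) := by
        have h1' : ∀ q, S.AT b ≠ Tm.lam q := fun q h => by cases h
        have h2' : ∀ q, (S.AT b).bind σ ≠ Tm.lam q := fun q h => by cases h
        have := Mof_nonlam_bind (S := S) (S.AT b) h1' σ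
        rw [Ft_eq, Ft_eq]
        show Tm.lam (.app (.app (S.XiT.bind (Tm.shs σ)) (t1.lift.bind (Tm.shs σ)))
          ((Mof (S.AT b)).bind (Tm.shs σ))) = _
        rw [Tm.lift_bind, this]
        rfl
      rw [e]
      exact Sim.ofF h1 h2 (ih1 σ) (ih2 σ)
    · subst he
      have e0 : S.Hterm = Tm.lam (.app S.LT (.lam (.var 1))) := rfl
      rw [e0, Ft_bind_lam]
      exact Sim.ofF h1 h2 (ih1 σ) (ih2 σ)
    · subst he
      have e0 : S.Kt w = Tm.lam w.lift := rfl
      rw [e0, Ft_bind_lam, ← e0]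
      exact Sim.ofF h1 h2 (ih1 σ) (ih2 σ)
    · subst he
      rw [Ft_eq a' b', Ft_bind_lam, ← Ft_eq a' b']
      exact Sim.ofF h1 h2 (ih1 σ) (ih2 σ)
  case ofFom =>
    intro α γ hγ t1 t2 _ ih1 σ
    by_cases hl : ∃ q, t2 = Tm.lam q
    · obtain ⟨q, rfl⟩ := hl
      rw [Ft_bind_lam]
      exact Sim.ofFom hγ (ih1 σ)
    · push_neg at hl
      rw [Ft_bind_nonlam t1 t2 hl σ]
      exact Sim.ofFom hγ (ih1 σ)
  case srefl =>
    intro τ hτ ρ hρ α σ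
    rw [(TT_closed' hτ hρ).bind_eq]
    exact Succ.refl hτ hρ α
  case fn =>
    intro τ1 τ2 ρ hρ α t _ ih σ
    have hIs : IsT1 (.arr τ1 τ2) := TT_arr_isT1 hρ
    have hτ2 : IsT1 τ2 := hIs.arr_inv.2
    rw [(TT_closed hIs hρ).bind_eq]
    refine Succ.fn hρ (fun t1 ht1 => ?_)
    by_cases hω : τ1 = ETy.omega
    · subst hω
      have hρ' := hρ
      rw [S.TT_omega_arr _ hτ2] at hρ'
      obtain ⟨ρ2, hρ2, he⟩ := hρ'
      subst he
      obtain ⟨k, hk⟩ := Tm.exists_fresh t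
      have ihk := ih (Tm.var k) (by rw [S.TT_omega]; trivial)
        (fun n => if n = k then t1 else σ n)
      rw [S.F_omega _ _ hρ2, (TT_closed hτ2 hρ2).bind_eq] at ihk
      have e1 : (Tm.app t (Tm.var k)).bind (fun n => if n = k then t1 else σ n)
          = .app (t.bind σ) t1 := by
        rw [Tm.bind_app]
        congr 1
        · exact Tm.bind_congr_free (fun n hn => by
            rw [if_neg (fun e => (e ▸ hk) hn)])
        · simp
      rw [e1] at ihk
      rw [S.F_omega _ _ hρ2]
      exact ihk
    · have hτ1 : IsT1 τ1 := hIs.arr_inv.1.resolve_right hω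
      have ihk := ih t1 ht1 σ
      rw [Tm.bind_app, (TT_closed hτ1 ht1).bind_eq,
        (TT_closed hτ2 (S.F_mapsto _ _ hIs _ hρ _ ht1)).bind_eq] at ihk
      exact ihk
  case topLA =>
    intro α b σ
    rw [top_closed.bind_eq]
    exact Succ.topLA α b
  case topLH =>
    intro α σ
    rw [top_closed.bind_eq]
    exact Succ.topLH α
  case topA =>
    intro b c hc α σ
    rw [top_closed.bind_eq]
    exact Succ.topA (mem_TT_bind hc σ) α
  case topH =>
    intro c hc α σ
    rw [top_closed.bind_eq]
    have hcC : Tm.Closed c := by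
      rcases hc with rfl | rfl
      · exact top_closed
      · exact bot_closed
    have e : (S.Ht c).bind σ = S.Ht c := by rw [Ht_bind, hcC.bind_eq]
    rw [e]
    exact Succ.topH hc α
  case xiTop =>
    intro α hα t1 t2 τ hs1 _ ih1 ih2 σ
    rw [top_closed.bind_eq]
    refine Succ.xiTop hα (ih1 σ) (fun t3 ht3 => ?_)
    by_cases hω : τ = ETy.omega
    · subst hω
      obtain ⟨k, hk⟩ := Tm.exists_fresh t2
      have ihk := ih2 (Tm.var k) (by rw [S.TT_omega]; trivial)
        (fun n => if n = k then t3 else σ n)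
      rw [top_closed.bind_eq] at ihk
      have e1 : (Tm.app t2 (Tm.var k)).bind (fun n => if n = k then t3 else σ n)
          = .app (t2.bind σ) t3 := by
        rw [Tm.bind_app]
        congr 1
        · exact Tm.bind_congr_free (fun n hn => by
            rw [if_neg (fun e => (e ▸ hk) hn)])
        · simp
      rw [e1] at ihk
      exact ihk
    · have ihk := ih2 t3 ht3 σ
      rw [top_closed.bind_eq, Tm.bind_app, (TT_closed' hω ht3).bind_eq] at ihk
      exact ihk
  case xiHTop =>
    intro α hα t1 t2 τ hs1 _ ih1 ih2 σ
    rw [top_closed.bind_eq]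
    have e : (S.Ht (.app (.app S.XiT t1) t2)).bind σ
        = S.Ht (.app (.app S.XiT (t1.bind σ)) (t2.bind σ)) := by
      rw [Ht_bind]; rfl
    rw [e]
    refine Succ.xiHTop hα (ih1 σ) (fun t3 ht3 => ?_)
    by_cases hω : τ = ETy.omega
    · subst hω
      obtain ⟨k, hk⟩ := Tm.exists_fresh t2
      have ihk := ih2 (Tm.var k) (by rw [S.TT_omega]; trivial)
        (fun n => if n = k then t3 else σ n)
      rw [top_closed.bind_eq] at ihk
      have e1 : (S.Ht (.app t2 (Tm.var k))).bind (fun n => if n = k then t3 else σ n)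
          = S.Ht (.app (t2.bind σ) t3) := by
        rw [Ht_bind, Tm.bind_app]
        congr 2
        · exact Tm.bind_congr_free (fun n hn => by
            rw [if_neg (fun e => (e ▸ hk) hn)])
        · simp
      rw [e1] at ihk
      exact ihk
    · have ihk := ih2 t3 ht3 σ
      rw [top_closed.bind_eq, Ht_bind, Tm.bind_app, (TT_closed' hω ht3).bind_eq] at ihk
      exact ihk
  case flTopEps =>
    intro α hα t1 t2 _ ih1 σ
    rw [top_closed.bind_eq]
    by_cases hl : ∃ q, t2 = Tm.lam q
    · obtain ⟨q, rfl⟩ := hl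
      have e : (Tm.app S.LT (S.Ft t1 (.lam q))).bind σ
          = .app S.LT (S.Ft (t1.bind σ) ((Tm.lam q).bind σ)) := by
        rw [Tm.bind_app, Ft_bind_lam]; rfl
      rw [e]
      exact Succ.flTopEps hα (ih1 σ)
    · push_neg at hl
      have e : (Tm.app S.LT (S.Ft t1 t2)).bind σ
          = .app S.LT (S.Ft (t1.bind σ) (etaE (t2.bind σ))) := by
        rw [Tm.bind_app, Ft_bind_nonlam t1 t2 hl σ]; rfl
      rw [e]
      exact Succ.flTopEps hα (ih1 σ)
  case flTop =>
    intro α hα t1 t2 τ hτ hs1 hlt ih1 ihlt σ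
    rw [top_closed.bind_eq]
    have ihk := ihlt σ
    rw [top_closed.bind_eq, Tm.bind_app, LT_closed.bind_eq] at ihk
    by_cases hl : ∃ q, t2 = Tm.lam q
    · obtain ⟨q, rfl⟩ := hl
      have e : (Tm.app S.LT (S.Ft t1 (.lam q))).bind σ
          = .app S.LT (S.Ft (t1.bind σ) ((Tm.lam q).bind σ)) := by
        rw [Tm.bind_app, Ft_bind_lam]; rfl
      rw [e]
      exact Succ.flTop hα hτ (ih1 σ) ihk
    · push_neg at hl
      have e : (Tm.app S.LT (S.Ft t1 t2)).bind σ
          = .app S.LT (S.Ft (t1.bind σ) (etaE (t2.bind σ))) := by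
        rw [Tm.bind_app, Ft_bind_nonlam t1 t2 hl σ]; rfl
      rw [e]
      exact Succ.flTop hα hτ (ih1 σ) (leadLt_prepend_eta ihk)
  case hiTop =>
    intro α hα t1 _ ih σ
    rw [top_closed.bind_eq]
    have ihk := ih σ
    rw [top_closed.bind_eq] at ihk
    rw [Ht_bind]
    exact Succ.hiTop hα ihk
  case xiBot =>
    intro α hα t1 t2 τ γ hγ hH hs1 t3 h3 hb ihH ih1 ihb σ
    rw [bot_closed.bind_eq]
    have ihH' := ihH σ
    rw [top_closed.bind_eq] at ihH'
    have eH : (S.Ht (.app (.app S.XiT t1) t2)).bind σ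
        = S.Ht (.app (.app S.XiT (t1.bind σ)) (t2.bind σ)) := by
      rw [Ht_bind]; rfl
    rw [eH] at ihH'
    have ihb' := ihb σ
    rw [bot_closed.bind_eq, Tm.bind_app] at ihb'
    exact Succ.xiBot hα hγ ihH' (ih1 σ) (mem_TT_bind h3 σ) ihb'

end Master
section Invert
variable {B : Type} {D : B → Type} {S : CanSys B D}
open CanSys

theorem steps_rename {α : Ordinal.{0}} {t s : Tm S.C} (h : Steps S α t s) (f : Nat → Nat) :
    Steps S α (t.rename f) (s.rename f) := by
  rw [Tm.rename_eq_bind, Tm.rename_eq_bind]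
  exact steps_bind h _

theorem stepsR_bind {t s : Tm S.C} (h : StepsR S t s) (σ : Nat → Tm S.C) :
    StepsR S (t.bind σ) (s.bind σ) := by
  induction h with
  | refl => exact Relation.ReflTransGen.refl
  | tail _ hstep ih =>
      obtain ⟨α, hα⟩ := hstep
      exact Relation.ReflTransGen.trans ih
        (stepsR_of_steps (steps_bind (steps_single hα) σ))

theorem stepsR_lift {t s : Tm S.C} (h : StepsR S t s) : StepsR S t.lift s.lift := by
  have e : ∀ z : Tm S.C, z.bind (fun n => Tm.var (n + 1)) = z.lift :=
    fun z => (Tm.rename_eq_bind _ z).symm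
  have := stepsR_bind h (fun n => Tm.var (n + 1))
  rwa [e, e] at this

theorem stepsR_Ht {t s : Tm S.C} (h : StepsR S t s) : StepsR S (S.Ht t) (S.Ht s) :=
  stepR_appR _ (stepR_lam (stepsR_lift h))

theorem stepsR_Ft_left {t t' : Tm S.C} (b : Tm S.C) (h : StepsR S t t') :
    StepsR S (S.Ft t b) (S.Ft t' b) := by
  rw [Ft_eq, Ft_eq]
  exact stepR_lam (stepR_appL _ (stepR_appR _ (stepsR_lift h)))

/-- `Step` preserves absence of a free variable. -/
theorem step_noVar {α : Ordinal.{0}} {t s : Tm S.C} (h : Step S α t s) :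
    ∀ k, ¬ Tm.Free k t → ¬ Tm.Free k s := by
  refine step_ind (P := fun α t s => ∀ k, ¬ Tm.Free k t → ¬ Tm.Free k s)
    ?_ ?_ ?_ ?_ ?_ ?_ h
  · intro α t s k hn hf
    rw [Tm.subst0, Tm.free_bind] at hf
    obtain ⟨m, hm, hσ⟩ := hf
    cases m with
    | zero => exact hn (Or.inr hσ)
    | succ j =>
        have : k = j := hσ
        subst this
        exact hn (Or.inl hm)
  · intro α t k hn hf
    refine hn ?_
    show Tm.Free (k+1) (Tm.app t.lift (.var 0))
    exact Or.inl (Tm.free_lift_succ.2 hf)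
  · intro α γ _ τ1 τ2 h1 c hc ρ1 hρ1 t _ k _ hf
    have hIs : IsT1 (.arr τ1 τ2) := TT_arr_isT1 hc
    exact TT_closed hIs.arr_inv.2 (S.F_mapsto _ _ hIs _ hc _ hρ1) k hf
  · intro α t t' s _ ih k hn hf
    rcases hf with hf | hf
    · exact ih k (fun h => hn (Or.inl h)) hf
    · exact hn (Or.inr hf)
  · intro t α s s' _ ih k hn hf
    rcases hf with hf | hf
    · exact hn (Or.inl hf)
    · exact ih k (fun h => hn (Or.inr h)) hf
  · intro α t t' _ ih k hn hf
    exact ih (k+1) hn hf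

theorem steps_noVar {α : Ordinal.{0}} {t s : Tm S.C} (h : Steps S α t s) :
    ∀ k, ¬ Tm.Free k t → ¬ Tm.Free k s := by
  refine steps_ind (P := fun α t s => ∀ k, ¬ Tm.Free k t → ¬ Tm.Free k s)
    (fun _ _ _ hn => hn) ?_ h
  intro α t u v _ hstep ih k hn
  exact step_noVar hstep k (ih k hn)

theorem lift_retract (z : Tm S.C) : (z.lift).bind (fun n => Tm.var (n - 1)) = z := by
  rw [Tm.lift, Tm.bind_rename]
  exact Eq.trans (Tm.bind_congr (fun n => by simp) z) (Tm.bind_var z)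

/-- reducts of lifted terms are lifted reducts -/
theorem steps_lift_inv {α : Ordinal.{0}} {t : Tm S.C} {w : Tm S.C}
    (h : Steps S α t.lift w) : ∃ t' : Tm S.C, w = t'.lift ∧ Steps S α t t' := by
  have key : ∀ {v w'}, Steps S α v w' → ∀ t, v = t.lift →
      ∃ t' : Tm S.C, w' = t'.lift ∧ Steps S α t t' := by
    intro v w' hs
    refine steps_ind (P := fun β v w' => ∀ t, v = t.lift →
      ∃ t' : Tm S.C, w' = t'.lift ∧ Steps S β t t') ?_ ?_ hs
    · intro β v t he
      exact ⟨t, he, Steps.refl β t⟩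
    · intro β v u w'' _ hstep ih t he
      obtain ⟨u', rfl, hsteps⟩ := ih t he
      have hnv : ¬ Tm.Free 0 w'' := step_noVar hstep 0 (Tm.not_free_lift u')
      obtain ⟨w2, rfl⟩ := Tm.exists_unlift hnv
      refine ⟨w2, rfl, steps_trans hsteps ?_⟩
      have := steps_bind (steps_single hstep) (fun n => Tm.var (n - 1))
      rwa [lift_retract, lift_retract] at this
  exact key h t rfl

/-- reducts of `c·u` for a constant `c` not in any canonical function type -/
theorem steps_const_app_inv {α : Ordinal.{0}} {c : S.C} {u w : Tm S.C}
    (hnot : ∀ τ1 τ2 : ETy B, (Tm.const c : Tm S.C) ∉ S.TT (.arr τ1 τ2))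
    (h : Steps S α (.app (.const c) u) w) :
    ∃ u', w = .app (.const c) u' ∧ Steps S α u u' := by
  have key : ∀ {v w'}, Steps S α v w' → ∀ u, v = .app (.const c) u →
      ∃ u', w' = .app (.const c) u' ∧ Steps S α u u' := by
    intro v w' hs
    refine steps_ind (P := fun β v w' => ∀ u, v = .app (.const c) u →
      ∃ u', w' = .app (.const c) u' ∧ Steps S β u u') ?_ ?_ hs
    · intro β v u he
      exact ⟨u, he, Steps.refl β u⟩
    · intro β v w1 w2 _ hstep ih u he
      obtain ⟨u', rfl, hsteps⟩ := ih u he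
      cases hstep with
      | crule hγ h1 hc hρ1 hsucc => exact absurd hc (hnot _ _)
      | appL s hl => exact absurd hl (fun h => step_const h)
      | appR _ hr => exact ⟨_, rfl, Steps.tail hsteps hr⟩
  exact key h u rfl

theorem lift_app_inv {t A M : Tm S.C} (h : t.lift = .app A M) :
    ∃ a m : Tm S.C, t = .app a m ∧ A = a.lift ∧ M = m.lift := by
  cases t with
  | app a m =>
      refine ⟨a, m, rfl, ?_, ?_⟩
      · exact (congrArg (fun x => match x with | Tm.app a' _ => a' | x => x) h).symm
      · exact (congrArg (fun x => match x with | Tm.app _ m' => m' | x => x) h).symm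
  | var n => exact absurd h (by simp [Tm.lift])
  | const c => exact absurd h (by simp [Tm.lift])
  | lam a => exact absurd h (by simp [Tm.lift, Tm.rename_lam])

/-! ### β-computations -/

theorem step_beta_Kt (β : Ordinal.{0}) (t s : Tm S.C) : Step S β (.app (S.Kt t) s) t := by
  have := Step.beta (S := S) β t.lift s
  rwa [Tm.subst0_lift] at this

theorem step_beta_Hterm (β : Ordinal.{0}) (s : Tm S.C) :
    Step S β (.app S.Hterm s) (S.Ht s) := by
  have := Step.beta (S := S) β (.app S.LT (.lam (.var 1))) s
  have e : (Tm.app S.LT (.lam (.var 1))).subst0 s = S.Ht s := rfl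
  rwa [e] at this

theorem Ft_subst0 (a b s : Tm S.C) :
    (Tm.app (.app S.XiT a.lift) (Mof b)).subst0 s
      = .app (.app S.XiT a) ((Mof b).subst0 s) := by
  show Tm.app (.app S.XiT (a.lift.subst0 s)) ((Mof b).subst0 s) = _
  rw [Tm.subst0_lift]

theorem step_beta_Ft (β : Ordinal.{0}) (a b s : Tm S.C) :
    Step S β (.app (S.Ft a b) s) (.app (.app S.XiT a) ((Mof b).subst0 s)) := by
  rw [Ft_eq]
  have := Step.beta (S := S) β (.app (.app S.XiT a.lift) (Mof b)) s
  rwa [Ft_subst0] at this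

/-- `redux v X` : the β-reduct of `v·X` if `v` is an abstraction, else `v·X`. -/
def redux (v X : Tm S.C) : Tm S.C :=
  match v with
  | .lam q => q.subst0 X
  | v => .app v X

theorem redux_stepsR (v X : Tm S.C) : StepsR S (.app v X) (redux v X) := by
  cases v with
  | lam q => exact stepsR_of_steps (steps_single (Step.beta 0 q X))
  | var n => exact Relation.ReflTransGen.refl
  | const c => exact Relation.ReflTransGen.refl
  | app a b => exact Relation.ReflTransGen.refl

theorem Mof_nonlam_subst0 (b s : Tm S.C) (hb : ∀ q, b ≠ .lam q) :
    (Mof b).subst0 s = Tm.lam (.app b.lift (.app s.lift (.var 0))) := by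
  have hform : Mof b = .lam (.app b.lift.lift (.app (.var 1) (.var 0))) := by
    cases b <;> first | rfl | exact absurd rfl (hb _)
  rw [hform]
  show Tm.lam ((Tm.app b.lift.lift (.app (.var 1) (.var 0))).bind
    (Tm.shs (fun n => match n with | 0 => s | m + 1 => .var m))) = _
  rw [Tm.bind_app, Tm.lift_bind]
  show Tm.lam (.app ((b.lift).subst0 s).lift _) = _
  rw [Tm.subst0_lift]
  rfl

theorem Mof_lam_subst0 (q s : Tm S.C) :
    (Mof (.lam q)).subst0 s
      = Tm.lam (q.bind (fun n => match n with
          | 0 => .app s.lift (.var 0) | m + 1 => .var (m + 1))) := by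
  show Tm.lam ((q.bind sq).bind
    (Tm.shs (fun n => match n with | 0 => s | m + 1 => .var m))) = _
  rw [Tm.bind_bind]
  refine congrArg Tm.lam (Tm.bind_congr (fun n => ?_) q)
  cases n with
  | zero => rfl
  | succ m => rfl

theorem step_Mof_app (β : Ordinal.{0}) (b s t3 : Tm S.C) :
    Step S β (.app ((Mof b).subst0 s) t3) (redux b (.app s t3)) := by
  by_cases hl : ∃ q, b = Tm.lam q
  · obtain ⟨q, rfl⟩ := hl
    rw [Mof_lam_subst0]
    have := Step.beta (S := S) β
      (q.bind (fun n => match n with | 0 => .app s.lift (.var 0) | m + 1 => .var (m + 1))) t3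
    have e : (q.bind (fun n => match n with
        | 0 => .app s.lift (.var 0) | m + 1 => .var (m + 1))).subst0 t3
        = redux (Tm.lam q) (.app s t3) := by
      show _ = q.subst0 (.app s t3)
      rw [Tm.subst0, Tm.subst0, Tm.bind_bind]
      refine Tm.bind_congr (fun n => ?_) q
      cases n with
      | zero =>
          show Tm.app (s.lift.subst0 t3) ((Tm.var 0).subst0 t3) = .app s t3
          rw [Tm.subst0_lift]
          rfl
      | succ m => rfl
    rwa [e] at this
  · push_neg at hl
    rw [Mof_nonlam_subst0 b s hl]
    have := Step.beta (S := S) β (.app b.lift (.app s.lift (.var 0))) t3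
    have e : (Tm.app b.lift (.app s.lift (.var 0))).subst0 t3 = .app b (.app s t3) := by
      show Tm.app (b.lift.subst0 t3) (.app (s.lift.subst0 t3) ((Tm.var 0).subst0 t3)) = _
      rw [Tm.subst0_lift, Tm.subst0_lift]
      rfl
    rw [e] at this
    have hr : redux b (.app s t3) = .app b (.app s t3) := by
      cases b <;> first | rfl | exact absurd rfl (hl _)
    rwa [hr]

end Invert
section Qstar
variable {B : Type} {D : B → Type} {S : CanSys B D}
open CanSys

theorem mof_expand (t : Tm S.C) :
    StepsR S (Tm.lam (.app t.lift.lift (.app (.var 1) (.var 0)))) (Mof t) := by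
  by_cases hl : ∃ q, t = Tm.lam q
  · obtain ⟨q, rfl⟩ := hl
    have e2 : (Tm.lam q).lift.lift
        = Tm.lam (q.rename (fun n => Tm.shr (· + 1) (Tm.shr (· + 1) n))) := by
      show ((Tm.lam q).rename (· + 1)).rename (· + 1) = _
      rw [Tm.rename_lam, Tm.rename_lam, Tm.rename_rename]
    have hb := Step.beta (S := S) (0 : Ordinal.{0})
      (q.rename (fun n => Tm.shr (· + 1) (Tm.shr (· + 1) n))) (.app (.var 1) (.var 0))
    have e3 : (q.rename (fun n => Tm.shr (· + 1) (Tm.shr (· + 1) n))).subst0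
        (.app (.var 1) (.var 0)) = q.bind sq := by
      rw [Tm.subst0, Tm.bind_rename]
      refine Tm.bind_congr (fun n => ?_) q
      cases n with
      | zero => rfl
      | succ m => rfl
    rw [e3] at hb
    have hst : Step S 0 (Tm.lam (.app ((Tm.lam q).lift.lift) (.app (.var 1) (.var 0))))
        (Mof (Tm.lam q)) := by
      rw [e2]
      exact Step.lam hb
    exact stepsR_of_steps (steps_single hst)
  · push_neg at hl
    have e : Mof t = Tm.lam (.app t.lift.lift (.app (.var 1) (.var 0))) := by
      cases t <;> first | rfl | exact absurd rfl (hl _)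
    rw [e]
    exact Relation.ReflTransGen.refl

theorem mof_step {β : Ordinal.{0}} {b b' : Tm S.C} (h : Step S β b b') :
    StepsR S (Mof b) (Mof b') := by
  by_cases hl : ∃ q, b = Tm.lam q
  · obtain ⟨q, rfl⟩ := hl
    cases h with
    | lam hq =>
        exact stepsR_of_steps (steps_lam (steps_bind (steps_single hq) sq))
    | eta =>
        -- q = .app b'.lift (.var 0)
        have e : Mof (Tm.lam (.app b'.lift (.var 0)))
            = Tm.lam (.app b'.lift.lift (.app (.var 1) (.var 0))) := by
          show Tm.lam ((Tm.app b'.lift (.var 0)).bind sq) = _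
          rw [Tm.bind_app, lift_bind_sq]
          rfl
        rw [e]
        exact mof_expand b'
  · push_neg at hl
    have e : Mof b = Tm.lam (.app b.lift.lift (.app (.var 1) (.var 0))) := by
      cases b <;> first | rfl | exact absurd rfl (hl _)
    rw [e]
    have hstep2 : Steps S β (b.lift.lift) (b'.lift.lift) :=
      steps_rename (steps_rename (steps_single h) _) _
    refine Relation.ReflTransGen.trans
      (stepR_lam (stepR_appL _ (stepsR_of_steps hstep2))) (mof_expand b')

theorem stepsR_Ft_right (a : Tm S.C) {b b' : Tm S.C} (h : StepsR S b b') :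
    StepsR S (S.Ft a b) (S.Ft a b') := by
  induction h with
  | refl => exact Relation.ReflTransGen.refl
  | tail _ hstep ih =>
      obtain ⟨β, hβ⟩ := hstep
      refine Relation.ReflTransGen.trans ih ?_
      rw [Ft_eq, Ft_eq]
      exact stepR_lam (stepR_appR _ (mof_step hβ))

theorem leadR_collect {ι : Type} (P : ι → Prop) (g : ι → Tm S.C) (ρ : Tm S.C)
    (h : ∀ i, P i → LeadR S (g i) ρ) :
    ∃ α : Ordinal.{0}, 0 < α ∧ ∀ i, P i → LeadLt S α (g i) ρ := by
  classical
  let F : {i // P i} → Ordinal.{0} := fun x => Classical.choose (leadR_iff.1 (h x.1 x.2))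
  refine ⟨Order.succ (iSup F), Ordinal.succ_pos _, fun i hi => ?_⟩
  have hF : Lead S (F ⟨i, hi⟩) (g i) ρ := Classical.choose_spec (leadR_iff.1 (h i hi))
  refine LeadLt.mk ?_ hF
  exact lt_of_le_of_lt (le_ciSup (Ordinal.bddAbove_range F) ⟨i, hi⟩) (Order.lt_succ _)

theorem sim_isTp {α : Ordinal.{0}} {t : Tm S.C} {τ : ETy B} (h : Sim S α t τ) : IsTp τ := by
  refine Sim.rec (motive_5 := fun _ _ τ _ => IsTp τ)
    (motive_1 := fun _ _ _ _ => True) (motive_2 := fun _ _ _ _ => True)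
    (motive_3 := fun _ _ _ _ => True) (motive_4 := fun _ _ _ _ => True)
    (motive_6 := fun _ _ _ _ => True)
    ?_ ?_ ?_ ?_ ?_ ?_ ?_ ?_ ?_ ?_ ?_ ?_ ?_ ?_ ?_ ?_ ?_ ?_ ?_ ?_ ?_ ?_ ?_ ?_ ?_ ?_ ?_ ?_ h
  · intros; trivial
  · intros; trivial
  · intros; trivial
  · intros; trivial
  · intros; trivial
  · intros; trivial
  · intros; trivial
  · intros; trivial
  · intros; trivial
  · intros; trivial
  · intro _ _; exact Or.inl (IsT1.base _)
  · intro _; exact Or.inl IsT1.o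
  · intro _ _ _ _; exact Or.inr (Or.inl rfl)
  · intro _ _ _ _; exact Or.inr (Or.inr rfl)
  · intro _ _ _ _ _ _ _ _ _ _ _ ih1 ih2; exact arrN_isTp ih1 ih2
  · intro _ _ _ _ _ _ _; exact Or.inr (Or.inl rfl)
  all_goals intros; trivial

theorem redux_Ft (t1 t2 X : Tm S.C) :
    redux (S.Ft t1 t2) X = .app (.app S.XiT t1) ((Mof t2).subst0 X) := by
  rw [Ft_eq]
  show (Tm.app (.app S.XiT t1.lift) (Mof t2)).subst0 X = _
  exact Ft_subst0 t1 t2 X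

/-- **Key lemma.** If `v ∼ τ` and `X` reduces to a canonical term of type `τ`, then
`v` applied to `X` (in contracted form) leads to `⊤`. -/
theorem Qstar {α : Ordinal.{0}} : ∀ {v : Tm S.C} {τ : ETy B}, Sim S α v τ →
    ∀ {X ρ : Tm S.C}, ρ ∈ S.TT τ → StepsR S X ρ → LeadR S (redux v X) S.top := by
  induction α using Ordinal.induction with
  | h α IH =>
  intro v τ hsim X ρ hρ hX
  cases hsim with
  | ofA b =>
      exact leadR_stepsR (stepR_appR _ hX) (leadR_of_succ (Succ.topA hρ 0))
  | ofH =>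
      have hρo : ρ = S.top ∨ ρ = S.bot := by rw [S.TT_o] at hρ; exact hρ
      exact leadR_stepsR (stepsR_Ht hX) (leadR_of_succ (Succ.topH hρo 0))
  | ofKom h =>
      show LeadR S ((Tm.lift _).subst0 X) S.top
      rw [Tm.subst0_lift]
      exact leadR_of_leadLt h
  | ofKeps h =>
      rw [S.TT_eps] at hρ
      exact absurd hρ (by simp)
  | ofFom hγ hsim1 =>
      rw [redux_Ft]
      refine leadR_of_succ (Succ.xiTop (Ordinal.succ_pos _)
        (sim_mono (Order.le_succ _) hsim1) (fun t3 ht3 => ?_))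
      rw [S.TT_eps] at ht3
      exact absurd ht3 (by simp)
  | ofF h1 h2 hs1 hs2 =>
      rename_i γ1 γ2 t1 t2 τ1 τ2
      rw [redux_Ft]
      have claim : ∀ t3, t3 ∈ S.TT τ1 → LeadR S (.app ((Mof t2).subst0 X) t3) S.top := by
        intro t3 ht3
        have hexists : ∃ ρ' : Tm S.C, ρ' ∈ S.TT τ2 ∧ StepsR S (.app X t3) ρ' := by
          by_cases hω : τ2 = ETy.omega
          · subst hω
            exact ⟨.app X t3, by rw [S.TT_omega]; trivial, Relation.ReflTransGen.refl⟩
          by_cases hε1 : τ1 = ETy.eps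
          · subst hε1
            rw [S.TT_eps] at ht3
            exact absurd ht3 (by simp)
          by_cases hε2 : τ2 = ETy.eps
          · subst hε2
            rw [arrN_eps_right hε1, S.TT_eps] at hρ
            exact absurd hρ (by simp)
          rw [arrN_plain hε1 hω hε2] at hρ
          have hIs : IsT1 (.arr τ1 τ2) := TT_arr_isT1 hρ
          have hτ2 : IsT1 τ2 := hIs.arr_inv.2
          by_cases hω1 : τ1 = ETy.omega
          · subst hω1
            have hρ' := hρ
            rw [S.TT_omega_arr _ hτ2] at hρ'
            obtain ⟨ρ2, hρ2, he⟩ := hρ'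
            subst he
            refine ⟨ρ2, hρ2, ?_⟩
            refine Relation.ReflTransGen.trans (stepR_appL _ hX) ?_
            have hb := Step.beta (S := S) (0 : Ordinal.{0}) ρ2 t3
            have e : ρ2.subst0 t3 = ρ2 := (TT_closed hτ2 hρ2).bind_eq _
            rw [e] at hb
            exact stepsR_of_steps (steps_single hb)
          · refine ⟨S.F τ1 τ2 ρ t3, S.F_mapsto _ _ hIs _ hρ _ ht3, ?_⟩
            refine Relation.ReflTransGen.trans (stepR_appL _ hX) ?_
            exact stepsR_of_steps (steps_single
              (Step.crule (show (0 : Ordinal.{0}) < 1 by norm_num) hω1 hρ ht3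
                (Succ.refl hω1 ht3 0)))
        obtain ⟨ρ', hρ'm, hρ's⟩ := hexists
        have hrec := IH γ2 h2 hs2 hρ'm hρ's
        exact leadR_stepsR (stepsR_of_steps (steps_single (step_Mof_app 0 t2 X t3))) hrec
      obtain ⟨αc, hαc, hcol⟩ := leadR_collect (· ∈ S.TT τ1) _ _ claim
      refine leadR_of_succ (Succ.xiTop (α := max αc (Order.succ γ1))
        (lt_of_lt_of_le hαc (le_max_left _ _))
        (sim_mono (le_trans (Order.le_succ _) (le_max_right _ _)) hs1)
        (fun t3 ht3 => leadLt_mono (le_max_left _ _) (hcol t3 ht3)))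

theorem Qstar_app {α : Ordinal.{0}} {v : Tm S.C} {τ : ETy B} (hsim : Sim S α v τ)
    {t3 : Tm S.C} (ht3 : t3 ∈ S.TT τ) : LeadR S (.app v t3) S.top :=
  leadR_stepsR (redux_stepsR v t3) (Qstar hsim ht3 Relation.ReflTransGen.refl)

end Qstar
section CV
variable {B : Type} {D : B → Type} {S : CanSys B D}
open CanSys

theorem lift_rename_shr (u : Tm S.C) : (u.lift).rename (Tm.shr (· + 1)) = u.lift.lift := by
  show (u.rename (· + 1)).rename (Tm.shr (· + 1)) = (u.rename (· + 1)).rename (· + 1)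
  rw [Tm.rename_rename, Tm.rename_rename]
  exact Tm.rename_congr (fun n => rfl) u

theorem lift_const_inv {t : Tm S.C} {c : S.C} (h : t.lift = .const c) : t = .const c := by
  cases t with
  | const c' => simpa [Tm.lift] using h
  | var n => exact absurd h (by simp [Tm.lift])
  | app a b => exact absurd h (by simp [Tm.lift])
  | lam a => exact absurd h (by simp [Tm.lift, Tm.rename_lam])

theorem unlift_XiApp {y t1 M : Tm S.C} (h : y.lift = .app (.app S.XiT t1.lift) M) :
    ∃ y2 : Tm S.C, y = .app (.app S.XiT t1) y2 ∧ M = y2.lift := by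
  obtain ⟨a, m, rfl, ha, hm⟩ := lift_app_inv h
  obtain ⟨a1, a2, rfl, ha1, ha2⟩ := lift_app_inv ha.symm
  have e1 : a1 = S.XiT := lift_const_inv ha1.symm
  have e2 : a2 = t1 := Tm.lift_injective ha2.symm
  exact ⟨m, by rw [e1, e2], hm⟩

theorem steps_lam_inv {γ : Ordinal.{0}} {Z0 w : Tm S.C}
    (h : Steps S γ (.lam Z0) w) (hnf : ¬ Tm.Free 0 Z0) :
    ∃ Z1, w = .lam Z1 ∧ Steps S γ Z0 Z1 ∧ ¬ Tm.Free 0 Z1 := by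
  have key : ∀ {v w'}, Steps S γ v w' → ∀ Z0', v = .lam Z0' → ¬ Tm.Free 0 Z0' →
      ∃ Z1, w' = .lam Z1 ∧ Steps S γ Z0' Z1 ∧ ¬ Tm.Free 0 Z1 := by
    intro v w' hs
    refine steps_ind (P := fun β v w' => ∀ Z0', v = .lam Z0' → ¬ Tm.Free 0 Z0' →
      ∃ Z1, w' = .lam Z1 ∧ Steps S β Z0' Z1 ∧ ¬ Tm.Free 0 Z1) ?_ ?_ hs
    · intro β v Z0' he hnf'
      exact ⟨Z0', he, Steps.refl β Z0', hnf'⟩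
    · intro β v w1 w2 _ hstep ih Z0' he hnf'
      obtain ⟨Z1, rfl, hsteps1, hnf1⟩ := ih Z0' he hnf'
      cases hstep with
      | lam hq =>
          refine ⟨_, rfl, Steps.tail hsteps1 hq, step_noVar hq 0 hnf1⟩
      | eta =>
          exact absurd (Or.inr rfl) hnf1
  exact key h Z0 rfl hnf

/-- If `L u ↠ v ≻ ⊤` then `u` reduces to one of finitely many recognized shapes.
Here: the reduct analysis of `L (K y)`-terms. -/
theorem CV (α : Ordinal.{0}) : ∀ {Z y : Tm S.C},
    Succ S α (.app S.LT (.lam Z)) S.top → Z = y.lift →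
    LeadR S y S.top ∨ LeadR S y S.bot := by
  induction α using Ordinal.induction with
  | h α IH =>
  intro Z y hsucc hZ
  have dich : ∀ {γ : Ordinal.{0}}, γ < α → ∀ {x : Tm S.C}, Lead S γ (S.Ht x) S.top →
      LeadR S x S.top ∨ LeadR S x S.bot := by
    intro γ hγ x hlead
    cases hlead with
    | mk hsteps hsucc' =>
        obtain ⟨u', he, hsteps'⟩ := steps_const_app_inv
          (fun τ1 τ2 => (S.prim_notin (.arr τ1 τ2) (by simp)).2.1) hsteps
        subst he
        obtain ⟨Z1, rfl, hsteps1, hnf1⟩ := steps_lam_inv hsteps' (Tm.not_free_lift x)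
        obtain ⟨y', rfl, hsteps2⟩ := steps_lift_inv hsteps1
        rcases IH γ hγ hsucc' rfl with hl | hl
        · exact Or.inl (leadR_stepsR (stepsR_of_steps hsteps2) hl)
        · exact Or.inr (leadR_stepsR (stepsR_of_steps hsteps2) hl)
  have main : ∀ {t ρ : Tm S.C}, Succ S α t ρ → t = .app S.LT (.lam Z) → ρ = S.top →
      LeadR S y S.top ∨ LeadR S y S.bot := by
    intro t ρ h het heρ
    cases h with
    | refl hτ hρ =>
        subst heρ
        obtain ⟨c, hc⟩ := S.TT_const .o IsT1.o (by simp) S.top top_mem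
        rw [hc] at het
        exact absurd het (by simp)
    | fn hρ h1 =>
        subst heρ
        rename_i τ1 τ2
        have hd := S.TT_disj ETy.o (.arr τ1 τ2) (by simp) (by simp) (by simp)
        exact absurd hρ (Set.disjoint_left.1 hd top_mem)
    | topLA =>
        injection het with h1 h2
        exact absurd h2 (by simp [CanSys.AT])
    | topLH =>
        injection het with h1 h2
        have h3 : Tm.lam (.app S.LT (.lam (.var 1))) = Tm.lam Z := h2
        injection h3 with h4
        refine absurd ?_ (Tm.not_free_lift y)
        rw [← hZ, ← h4]
        exact Or.inr rfl
    | topA hc =>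
        rename_i b c
        injection het with h1 h2
        simp only [CanSys.AT, CanSys.LT, Tm.const.injEq] at h1
        exact absurd h1.symm (S.hLA b)
    | topH hc =>
        injection het with h1 h2
        have h3 : Tm.lam (Tm.lift _) = Tm.lam Z := h2
        injection h3 with h4
        have hy : y = _ := Tm.lift_injective (h4.trans hZ).symm
        rcases hc with rfl | rfl
        · refine Or.inl (leadR_of_succ (α := 0) ?_)
          rw [hy]
          exact Succ.refl (show (ETy.o : ETy B) ≠ .omega by simp) top_mem 0
        · refine Or.inr (leadR_of_succ (α := 0) ?_)
          rw [hy]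
          exact Succ.refl (show (ETy.o : ETy B) ≠ .omega by simp) bot_mem 0
    | xiTop hα hs1 h2 =>
        injection het with h1 h2
        exact absurd h1 (by simp [CanSys.XiT, CanSys.LT])
    | xiBot hα hγ hH hs1 h3 hb =>
        exact absurd heρ.symm S.top_ne_bot
    | hiTop hα h1 =>
        injection het with he1 he2
        have h3 : Tm.lam (Tm.lift _) = Tm.lam Z := he2
        injection h3 with h4
        have hy : y = _ := Tm.lift_injective (h4.trans hZ).symm
        refine Or.inl ?_
        rw [hy]
        exact leadR_of_leadLt h1
    | xiHTop hα hs1 h2 =>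
        rename_i t1 t2 τ
        injection het with he1 he2
        have h3 : Tm.lam ((Tm.app (.app S.XiT t1) t2).lift) = Tm.lam Z := he2
        injection h3 with h4
        have hy : y = .app (.app S.XiT t1) t2 := Tm.lift_injective (h4.trans hZ).symm
        have dich2 : ∀ t3 ∈ S.TT τ, LeadR S (.app t2 t3) S.top ∨ LeadR S (.app t2 t3) S.bot := by
          intro t3 ht3
          cases h2 t3 ht3 with
          | mk hγ hl => exact dich hγ hl
        by_cases hbot : ∃ t3 ∈ S.TT τ, LeadR S (.app t2 t3) S.bot
        · obtain ⟨t3, ht3, hb⟩ := hbot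
          obtain ⟨δ, hδ⟩ := leadR_iff.1 hb
          have hsucc' : Succ S α (S.Ht (.app (.app S.XiT t1) t2)) S.top := by
            have := hsucc
            rw [hZ, hy] at this
            exact this
          refine Or.inr (leadR_of_succ (α := Order.succ (max α δ)) ?_)
          rw [hy]
          refine Succ.xiBot (Ordinal.succ_pos _)
            (lt_of_le_of_lt (le_max_left _ _) (Order.lt_succ _)) hsucc'
            (sim_mono (le_of_lt (lt_of_le_of_lt (le_max_left _ _) (Order.lt_succ _))) hs1) ht3
            (LeadLt.mk (lt_of_le_of_lt (le_max_right _ _) (Order.lt_succ _)) hδ)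
        · have htop : ∀ t3 ∈ S.TT τ, LeadR S (.app t2 t3) S.top := fun t3 ht3 =>
            (dich2 t3 ht3).resolve_right (fun hb => hbot ⟨t3, ht3, hb⟩)
          obtain ⟨αc, hαc, hcol⟩ := leadR_collect (· ∈ S.TT τ) _ _ htop
          refine Or.inl (leadR_of_succ (α := max αc α) ?_)
          rw [hy]
          exact Succ.xiTop (lt_of_lt_of_le hαc (le_max_left _ _))
            (sim_mono (le_max_right _ _) hs1)
            (fun t3 ht3 => leadLt_mono (le_max_left _ _) (hcol t3 ht3))
    | flTopEps hα hs1 =>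
        rename_i t1 t2
        injection het with he1 he2
        rw [Ft_eq] at he2
        injection he2 with h4
        obtain ⟨y2, hy, hM⟩ := unlift_XiApp (hZ ▸ h4.symm : y.lift = _)
        refine Or.inl (leadR_of_succ (α := α) ?_)
        rw [hy]
        refine Succ.xiTop hα hs1 (fun t3 ht3 => ?_)
        rw [S.TT_eps] at ht3
        exact absurd ht3 (by simp)
    | flTop hα hτ hs1 hlt =>
        rename_i t1 t2 τ
        injection het with he1 he2
        rw [Ft_eq] at he2
        injection he2 with h4
        obtain ⟨y2, hy, hM⟩ := unlift_XiApp (hZ ▸ h4.symm : y.lift = _)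
        by_cases hl : ∃ q, t2 = Tm.lam q
        · obtain ⟨q, rfl⟩ := hl
          have hq0 : ¬ Tm.Free 0 q := by
            intro h0
            apply Tm.not_free_lift y2
            rw [← hM]
            show Tm.Free 1 (q.bind sq)
            exact Tm.free_bind.2 ⟨0, h0, Or.inl rfl⟩
          obtain ⟨w, rfl⟩ := Tm.exists_unlift hq0
          have hy2 : y2 = S.Kt w := by
            apply Tm.lift_injective
            rw [← hM]
            show Tm.lam (w.lift.bind sq) = (S.Kt w).lift
            rw [lift_bind_sq]
            show Tm.lam (w.lift.lift) = (Tm.lam w.lift).rename (· + 1)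
            rw [Tm.rename_lam, lift_rename_shr]
          rw [hy2] at hy
          have hw : LeadR S w S.top ∨ LeadR S w S.bot := by
            cases hlt with
            | mk hγ hlead => exact dich hγ hlead
          rcases hw with hw | hw
          · obtain ⟨δ, hδ⟩ := leadR_iff.1 hw
            refine Or.inl (leadR_of_succ (α := max α (Order.succ δ)) ?_)
            rw [hy]
            refine Succ.xiTop
              (lt_of_lt_of_le hα (le_max_left _ _))
              (sim_mono (le_max_left _ _) hs1) (fun t3 ht3 => ?_)
            refine LeadLt.mk (lt_of_lt_of_le (Order.lt_succ δ) (le_max_right _ _)) ?_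
            exact lead_steps (steps_single (step_beta_Kt δ w t3)) hδ
          · by_cases hTT : ∃ t3, t3 ∈ S.TT τ
            · obtain ⟨t3, ht3⟩ := hTT
              obtain ⟨δ, hδ⟩ := leadR_iff.1 hw
              have hsucc' : Succ S α (S.Ht (.app (.app S.XiT t1) (S.Kt w))) S.top := by
                have := hsucc
                rw [hZ, hy] at this
                exact this
              refine Or.inr (leadR_of_succ (α := Order.succ (max α δ)) ?_)
              rw [hy]
              refine Succ.xiBot (Ordinal.succ_pos _)
                (lt_of_le_of_lt (le_max_left _ _) (Order.lt_succ _)) hsucc'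
                (sim_mono (le_of_lt (lt_of_le_of_lt (le_max_left _ _) (Order.lt_succ _))) hs1)
                ht3 ?_
              refine LeadLt.mk (lt_of_le_of_lt (le_max_right _ _) (Order.lt_succ _)) ?_
              exact lead_steps (steps_single (step_beta_Kt _ w t3)) hδ
            · refine Or.inl (leadR_of_succ (α := α) ?_)
              rw [hy]
              exact Succ.xiTop hα hs1 (fun t3 ht3 => absurd ⟨t3, ht3⟩ hTT)
        · push_neg at hl
          exfalso
          apply Tm.not_free_lift y2
          rw [← hM]
          have e : Mof t2 = Tm.lam (.app t2.lift.lift (.app (.var 1) (.var 0))) := by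
            cases t2 <;> first | rfl | exact absurd rfl (hl _)
          rw [e]
          exact Or.inr (Or.inl rfl)
  exact main hsucc rfl rfl

end CV
section LemA
variable {B : Type} {D : B → Type} {S : CanSys B D}
open CanSys

/-- **Main inversion.** If `L u ≻_α ⊤` then `u` reduces to a `∼`-typable term. -/
theorem lemA (α : Ordinal.{0}) : ∀ {u : Tm S.C}, Succ S α (.app S.LT u) S.top →
    ∃ (v : Tm S.C) (τ : ETy B) (β : Ordinal.{0}), StepsR S u v ∧ Sim S β v τ := by
  induction α using Ordinal.induction with
  | h α IH =>
  intro u hsucc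
  have main : ∀ {t ρ : Tm S.C}, Succ S α t ρ → t = .app S.LT u → ρ = S.top →
      ∃ (v : Tm S.C) (τ : ETy B) (β : Ordinal.{0}), StepsR S u v ∧ Sim S β v τ := by
    intro t ρ h het heρ
    cases h with
    | refl hτ hρ =>
        subst heρ
        obtain ⟨c, hc⟩ := S.TT_const .o IsT1.o (by simp) S.top top_mem
        rw [hc] at het
        exact absurd het (by simp)
    | fn hρ h1 =>
        subst heρ
        rename_i τ1 τ2
        have hd := S.TT_disj ETy.o (.arr τ1 τ2) (by simp) (by simp) (by simp)
        exact absurd hρ (Set.disjoint_left.1 hd top_mem)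
    | topLA =>
        rename_i b
        injection het with h1 h2
        exact ⟨S.AT b, .base b, 0, by rw [← h2]; exact Relation.ReflTransGen.refl, Sim.ofA 0 b⟩
    | topLH =>
        injection het with h1 h2
        exact ⟨S.Hterm, .o, 0, by rw [← h2]; exact Relation.ReflTransGen.refl, Sim.ofH 0⟩
    | topA hc =>
        rename_i b c
        injection het with h1 h2
        simp only [CanSys.AT, CanSys.LT, Tm.const.injEq] at h1
        exact absurd h1.symm (S.hLA b)
    | topH hc =>
        rename_i c
        injection het with h1 h2
        rcases hc with rfl | rfl
        · refine ⟨S.Kt S.top, .omega, 1, by rw [← h2]; exact Relation.ReflTransGen.refl, Sim.ofKom ?_⟩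
          exact LeadLt.mk (by norm_num) (Lead.mk (Steps.refl 0 _)
            (Succ.refl (show (ETy.o : ETy B) ≠ .omega by simp) top_mem 0))
        · refine ⟨S.Kt S.bot, .eps, 1, by rw [← h2]; exact Relation.ReflTransGen.refl, Sim.ofKeps ?_⟩
          exact LeadLt.mk (by norm_num) (Lead.mk (Steps.refl 0 _)
            (Succ.refl (show (ETy.o : ETy B) ≠ .omega by simp) bot_mem 0))
    | xiTop hα hs1 h2 =>
        injection het with h1 h2
        exact absurd h1 (by simp [CanSys.XiT, CanSys.LT])
    | xiBot hα hγ hH hs1 h3 hb =>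
        exact absurd heρ.symm S.top_ne_bot
    | hiTop hα h1 =>
        rename_i t1
        injection het with he1 he2
        exact ⟨S.Kt t1, .omega, α, by rw [← he2]; exact Relation.ReflTransGen.refl, Sim.ofKom h1⟩
    | xiHTop hα hs1 h2 =>
        rename_i t1 t2 τ
        injection het with he1 he2
        have hsucc' : Succ S α (.app S.LT
            (.lam ((Tm.app (.app S.XiT t1) t2).lift))) S.top := by
          rw [show Tm.lam ((Tm.app (.app S.XiT t1) t2).lift)
            = S.Kt (.app (.app S.XiT t1) t2) from rfl, he2]
          exact hsucc
        rcases CV α hsucc' rfl with hv | hv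
        · obtain ⟨δ, hδ⟩ := leadR_iff.1 hv
          exact ⟨S.Kt (.app (.app S.XiT t1) t2), .omega, Order.succ δ, by rw [← he2]; exact Relation.ReflTransGen.refl,
            Sim.ofKom (LeadLt.mk (Order.lt_succ δ) hδ)⟩
        · obtain ⟨δ, hδ⟩ := leadR_iff.1 hv
          exact ⟨S.Kt (.app (.app S.XiT t1) t2), .eps, Order.succ δ, by rw [← he2]; exact Relation.ReflTransGen.refl,
            Sim.ofKeps (LeadLt.mk (Order.lt_succ δ) hδ)⟩
    | flTopEps hα hs1 =>
        rename_i t1 t2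
        injection het with he1 he2
        exact ⟨S.Ft t1 t2, .omega, Order.succ α, by rw [← he2]; exact Relation.ReflTransGen.refl,
          Sim.ofFom (Order.lt_succ α) hs1⟩
    | flTop hα hτ hs1 hlt =>
        rename_i t1 t2 τ
        injection het with he1 he2
        cases hlt with
        | mk hγ hlead =>
            cases hlead with
            | mk hsteps hsucc2 =>
                obtain ⟨b1, rfl, hsteps1⟩ := steps_const_app_inv
                  (fun τ1 τ2 => (S.prim_notin (.arr τ1 τ2) (by simp)).2.1) hsteps
                obtain ⟨vb, τb, βb, hvbsteps, hvbsim⟩ := IH _ hγ hsucc2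
                refine ⟨S.Ft t1 vb, arrN τ τb, Order.succ (max α βb), ?_, ?_⟩
                · rw [← he2]
                  exact stepsR_Ft_right t1
                    (Relation.ReflTransGen.trans (stepsR_of_steps hsteps1) hvbsteps)
                · exact Sim.ofF (lt_of_le_of_lt (le_max_left _ _) (Order.lt_succ _))
                    (lt_of_le_of_lt (le_max_right _ _) (Order.lt_succ _)) hs1 hvbsim
  exact main hsucc rfl rfl

end LemA
/-- **Lemma 4.20 (Ξ-introduction, Ξ_H and F_L in the model).**  For all `t₁, t₂`:
(1) if `L t₁ ⇝ ⊤` and `t₂ t₃ ⇝ ⊤` for all `t₃` with `t₁ t₃ ⇝ ⊤`, then `Ξ t₁ t₂ ⇝ ⊤`;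
(2) if `L t₁ ⇝ ⊤` and `H(t₂ t₃) ⇝ ⊤` for all `t₃` with `t₁ t₃ ⇝ ⊤`, then
`H(Ξ t₁ t₂) ⇝ ⊤`; (3) if `L t₁ ⇝ ⊤`, and either `L t₂ ⇝ ⊤` or there is no `t₃`
with `t₁ t₃ ⇝ ⊤`, then `L (F t₁ t₂) ⇝ ⊤`. -/
theorem model_conditions {B : Type} [Finite B] {D : B → Type} (hD : ∀ b, Nonempty (D b))
    (S : CanSys B D) :
    -- (1)
    (∀ t1 t2 : Tm S.C, LeadR S (.app S.LT t1) S.top →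
        (∀ t3 : Tm S.C, LeadR S (.app t1 t3) S.top → LeadR S (.app t2 t3) S.top) →
        LeadR S (.app (.app S.XiT t1) t2) S.top) ∧
    -- (2)
    (∀ t1 t2 : Tm S.C, LeadR S (.app S.LT t1) S.top →
        (∀ t3 : Tm S.C, LeadR S (.app t1 t3) S.top → LeadR S (S.Ht (.app t2 t3)) S.top) →
        LeadR S (S.Ht (.app (.app S.XiT t1) t2)) S.top) ∧
    -- (3)
    (∀ t1 t2 : Tm S.C, LeadR S (.app S.LT t1) S.top →
        (LeadR S (.app S.LT t2) S.top ∨ ¬ ∃ t3 : Tm S.C, LeadR S (.app t1 t3) S.top) →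
        LeadR S (.app S.LT (S.Ft t1 t2)) S.top) := by
  have extract : ∀ t1 : Tm S.C, LeadR S (.app S.LT t1) S.top →
      ∃ (v : Tm S.C) (τ : ETy B) (β : Ordinal.{0}), StepsR S t1 v ∧ Sim S β v τ := by
    intro t1 h
    obtain ⟨α₀, hlead⟩ := leadR_iff.1 h
    cases hlead with
    | mk hsteps hsucc =>
        obtain ⟨u, rfl, hsteps1⟩ := steps_const_app_inv
          (fun τ1 τ2 => (S.prim_notin (.arr τ1 τ2) (by simp)).2.1) hsteps
        obtain ⟨v, τ, β, hv, hsim⟩ := lemA α₀ hsucc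
        exact ⟨v, τ, β, Relation.ReflTransGen.trans (stepsR_of_steps hsteps1) hv, hsim⟩
  refine ⟨?_, ?_, ?_⟩
  · -- (1)
    intro t1 t2 hL hyp
    obtain ⟨v, τ, β, hsteps, hsim⟩ := extract t1 hL
    have hQ : ∀ t3 ∈ S.TT τ, LeadR S (.app t1 t3) S.top := fun t3 ht3 =>
      leadR_stepsR (stepR_appL t3 hsteps) (Qstar_app hsim ht3)
    have h2 : ∀ t3 ∈ S.TT τ, LeadR S (.app t2 t3) S.top := fun t3 ht3 =>
      hyp t3 (hQ t3 ht3)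
    obtain ⟨αc, hαc, hcol⟩ := leadR_collect (· ∈ S.TT τ) _ _ h2
    refine leadR_stepsR (stepR_appL t2 (stepR_appR S.XiT hsteps)) ?_
    exact leadR_of_succ (α := max αc (Order.succ β)) (Succ.xiTop
      (lt_of_lt_of_le hαc (le_max_left _ _))
      (sim_mono (le_trans (Order.le_succ β) (le_max_right _ _)) hsim)
      (fun t3 ht3 => leadLt_mono (le_max_left _ _) (hcol t3 ht3)))
  · -- (2)
    intro t1 t2 hL hyp
    obtain ⟨v, τ, β, hsteps, hsim⟩ := extract t1 hL
    have hQ : ∀ t3 ∈ S.TT τ, LeadR S (.app t1 t3) S.top := fun t3 ht3 =>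
      leadR_stepsR (stepR_appL t3 hsteps) (Qstar_app hsim ht3)
    have h2 : ∀ t3 ∈ S.TT τ, LeadR S (S.Ht (.app t2 t3)) S.top := fun t3 ht3 =>
      hyp t3 (hQ t3 ht3)
    obtain ⟨αc, hαc, hcol⟩ := leadR_collect (· ∈ S.TT τ) _ _ h2
    refine leadR_stepsR (stepsR_Ht (stepR_appL t2 (stepR_appR S.XiT hsteps))) ?_
    exact leadR_of_succ (α := max αc (Order.succ β)) (Succ.xiHTop
      (lt_of_lt_of_le hαc (le_max_left _ _))
      (sim_mono (le_trans (Order.le_succ β) (le_max_right _ _)) hsim)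
      (fun t3 ht3 => leadLt_mono (le_max_left _ _) (hcol t3 ht3)))
  · -- (3)
    intro t1 t2 hL hyp
    obtain ⟨v, τ, β, hsteps, hsim⟩ := extract t1 hL
    have hred : StepsR S (.app S.LT (S.Ft t1 t2)) (.app S.LT (S.Ft v t2)) :=
      stepR_appR S.LT (stepsR_Ft_left t2 hsteps)
    by_cases hε : τ = ETy.eps
    · subst hε
      exact leadR_stepsR hred (leadR_of_succ (α := Order.succ β)
        (Succ.flTopEps (Ordinal.succ_pos β) (sim_mono (Order.le_succ β) hsim)))
    · rcases hyp with hyp | hyp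
      · obtain ⟨δ, hδ⟩ := leadR_iff.1 hyp
        exact leadR_stepsR hred (leadR_of_succ (α := Order.succ (max β δ))
          (Succ.flTop (Ordinal.succ_pos _) hε
            (sim_mono (le_of_lt (lt_of_le_of_lt (le_max_left _ _) (Order.lt_succ _))) hsim)
            (LeadLt.mk (lt_of_le_of_lt (le_max_right _ _) (Order.lt_succ _)) hδ)))
      · exfalso
        obtain ⟨t3, ht3⟩ := CanSys.TT_nonempty' hD (sim_isTp hsim) hε
        exact hyp ⟨t3, leadR_stepsR (stepR_appL t3 hsteps) (Qstar_app hsim ht3)⟩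

end ILM
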